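/- arXiv:0910.1077 — 8 statements merged into one kernel-verified Lean document; each statement's English description precedes it below -/
import Mathlib

section
/- Given a probability distribution π on a finite set S, there exists an infinite sequence s₁, s₂, … of elements of S such that for every integer k ≥ 1 and every s ∈ S, the quantity N_k(s) := #{i : 1 ≤ i ≤ k and s_i = s} satisfies |N_k(s) − k·π(s)| ≤ 1. -/
open Finset

section aux

variable {S : Type*} [Fintype S] [DecidableEq S]

/-- The invariant maintained by the greedy construction: `N` is the vector of counts
after `k` steps; it sums to `k`, satisfies the strict upper quota, and a Hall-type
feasibility condition for all future times `m ≥ k`. -/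
def good (π : S → ℝ) (k : ℕ) (N : S → ℕ) : Prop :=
  (∑ s, N s) = k ∧ (∀ s, (N s : ℝ) < k * π s + 1) ∧
    ∀ m : ℕ, k ≤ m →
      (∑ s, max 0 (⌈(m : ℝ) * π s⌉ - 1 - (N s : ℤ))) ≤ (m : ℤ) - (k : ℤ)

lemma good_zero (π : S → ℝ) (hπ0 : ∀ s, 0 ≤ π s) (hπ1 : ∑ s, π s = 1) :
    good π 0 (fun _ => 0) := by
  refine ⟨by simp, fun s => by simp, fun m _ => ?_⟩
  have hreal : ∀ s : S, ((max 0 (⌈(m : ℝ) * π s⌉ - 1 - ((0 : ℕ) : ℤ)) : ℤ) : ℝ)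
      ≤ (m : ℝ) * π s := by
    intro s
    have h1 : (0 : ℝ) ≤ (m : ℝ) * π s := mul_nonneg (by positivity) (hπ0 s)
    have h2 : ((⌈(m : ℝ) * π s⌉ : ℝ)) < (m : ℝ) * π s + 1 := Int.ceil_lt_add_one _
    push_cast
    rw [max_le_iff]
    exact ⟨h1, by linarith⟩
  have hsumle : ((∑ s, max 0 (⌈(m : ℝ) * π s⌉ - 1 - ((0 : ℕ) : ℤ))) : ℝ) ≤ (m : ℝ) := by
    calc ((∑ s, max 0 (⌈(m : ℝ) * π s⌉ - 1 - ((0 : ℕ) : ℤ))) : ℝ)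
        = ∑ s, ((max 0 (⌈(m : ℝ) * π s⌉ - 1 - ((0 : ℕ) : ℤ)) : ℤ) : ℝ) := by
          push_cast; ring
      _ ≤ ∑ s, (m : ℝ) * π s := Finset.sum_le_sum (fun s _ => hreal s)
      _ = (m : ℝ) := by rw [← Finset.mul_sum, hπ1, mul_one]
  have h : (∑ s, max 0 (⌈(m : ℝ) * π s⌉ - 1 - ((0 : ℕ) : ℤ))) ≤ (m : ℤ) := by
    exact_mod_cast hsumle
  simpa using h

lemma good_step (π : S → ℝ) (hπ0 : ∀ s, 0 ≤ π s) (hπ1 : ∑ s, π s = 1)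
    (k : ℕ) (N : S → ℕ) (h : good π k N) :
    ∃ a : S, good π (k + 1) (Function.update N a (N a + 1)) := by
  obtain ⟨hsum, hup, hneed⟩ := h
  have hNsum : (∑ s, (N s : ℝ)) = (k : ℝ) := by exact_mod_cast hsum
  -- eligible set
  set E : Finset S := univ.filter (fun s => (N s : ℝ) < ((k : ℝ) + 1) * π s) with hE
  have hEne : E.Nonempty := by
    by_contra hne
    rw [Finset.not_nonempty_iff_eq_empty, Finset.filter_eq_empty_iff] at hne
    have hle : ∑ s, ((k : ℝ) + 1) * π s ≤ ∑ s, (N s : ℝ) := by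
      refine Finset.sum_le_sum fun s hs => ?_
      have := hne hs
      linarith [not_lt.mp this]
    rw [← Finset.mul_sum, hπ1, mul_one, hNsum] at hle
    linarith
  obtain ⟨a, haE, hamin⟩ := E.exists_min_image (fun s => ((N s : ℝ) + 1) / π s) hEne
  have haElt : (N a : ℝ) < ((k : ℝ) + 1) * π a := (Finset.mem_filter.mp haE).2
  have haπ : 0 < π a := by
    by_contra hc
    push_neg at hc
    have h1 : ((k : ℝ) + 1) * π a ≤ 0 := mul_nonpos_of_nonneg_of_nonpos (by positivity) hc
    have h2 : (0 : ℝ) ≤ (N a : ℝ) := Nat.cast_nonneg _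
    linarith
  refine ⟨a, ?_, ?_, ?_⟩
  · -- sum
    rw [Finset.sum_update_of_mem (Finset.mem_univ a), ← Finset.erase_eq]
    have h2 := Finset.sum_erase_add univ N (Finset.mem_univ a)
    rw [hsum] at h2
    omega
  · -- upper quota
    intro s
    by_cases hs : s = a
    · subst hs
      rw [Function.update_self]
      push_cast
      linarith
    · rw [Function.update_of_ne hs]
      have h1 : (k : ℝ) * π s ≤ ((k : ℝ) + 1) * π s :=
        mul_le_mul_of_nonneg_right (by linarith) (hπ0 s)
      have := hup s
      push_cast
      linarith
  · -- Hall condition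
    intro m hm
    have hkm : k ≤ m := le_trans (Nat.le_succ k) hm
    have hmr : (k : ℝ) + 1 ≤ (m : ℝ) := by exact_mod_cast hm
    have hT := hneed m hkm
    set c : S → ℤ := fun s => ⌈(m : ℝ) * π s⌉ - 1 - (N s : ℤ) with hc
    have hsplitT : (∑ s, max 0 (c s))
        = (∑ s ∈ univ.erase a, max 0 (c s)) + max 0 (c a) :=
      (Finset.sum_erase_add _ _ (Finset.mem_univ a)).symm
    have hsplit : (∑ s, max 0 (⌈(m : ℝ) * π s⌉ - 1 - ((Function.update N a (N a + 1) s : ℕ) : ℤ)))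
        = (∑ s ∈ univ.erase a, max 0 (c s)) + max 0 (c a - 1) := by
      rw [← Finset.sum_erase_add _ _ (Finset.mem_univ a)]
      congr 1
      · refine Finset.sum_congr rfl fun s hs => ?_
        rw [Function.update_of_ne (Finset.ne_of_mem_erase hs)]
      · rw [Function.update_self]
        congr 1
        simp only [hc]
        push_cast
        ring
    rw [hsplit]
    by_cases hca : 1 ≤ c a
    · -- the needy element a gets decremented
      have h1 : max 0 (c a - 1) = max 0 (c a) - 1 := by
        rw [max_eq_right (by omega : (0:ℤ) ≤ c a - 1), max_eq_right (by omega : (0:ℤ) ≤ c a)]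
      rw [h1]
      rw [hsplitT] at hT
      push_cast at hT ⊢
      omega
    · -- no element of E is needy at time m; total need is at most m - k - 1
      push_neg at hca
      have hEnoneed : ∀ s ∈ E, c s ≤ 0 := by
        intro s hsE
        by_contra hcs
        push_neg at hcs
        have hcs' : (N s : ℤ) + 1 < ⌈(m : ℝ) * π s⌉ := by
          have h3 : 0 < c s := hcs
          simp only [hc] at h3
          omega
        have hπs : 0 < π s := by
          have hlt : (N s : ℝ) < ((k : ℝ) + 1) * π s := (Finset.mem_filter.mp hsE).2
          by_contra hc2
          push_neg at hc2
          have h1 : ((k : ℝ) + 1) * π s ≤ 0 := mul_nonpos_of_nonneg_of_nonpos (by positivity) hc2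
          have h2 : (0 : ℝ) ≤ (N s : ℝ) := Nat.cast_nonneg _
          linarith
        have hms : ((N s : ℝ) + 1) < (m : ℝ) * π s := by
          have := Int.lt_ceil.mp hcs'
          push_cast at this
          linarith
        have hmin := hamin s hsE
        have hqa : ((N a : ℝ) + 1) / π a < (m : ℝ) := by
          have hqs : ((N s : ℝ) + 1) / π s < (m : ℝ) := by
            rw [div_lt_iff₀ hπs]
            linarith
          linarith
        have hma : ((N a : ℝ) + 1) < (m : ℝ) * π a := by
          rw [div_lt_iff₀ haπ] at hqa
          linarith
        have hca2 : 0 < c a := by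
          have : ((N a : ℤ) + 1) < ⌈(m : ℝ) * π a⌉ := by
            rw [Int.lt_ceil]
            push_cast
            linarith
          simp only [hc]
          omega
        omega
      -- bound the total need by (m - k - 1)
      have hbound : ((∑ s, max 0 (c s)) : ℝ) ≤ ((m : ℝ) - k - 1) := by
        have hterm : ∀ s ∈ (univ : Finset S),
            ((max 0 (c s) : ℤ) : ℝ) ≤ ((m : ℝ) - k - 1) * π s := by
          intro s _
          have hnn : (0 : ℝ) ≤ ((m : ℝ) - k - 1) * π s := by
            apply mul_nonneg _ (hπ0 s)
            linarith
          rcases le_or_gt (c s) 0 with hcs | hcs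
          · rw [max_eq_left hcs]
            simpa using hnn
          · rw [max_eq_right hcs.le]
            have hsE : s ∉ E := by
              intro hsE
              exact absurd (hEnoneed s hsE) (by omega)
            have hineq : ((k : ℝ) + 1) * π s ≤ (N s : ℝ) := by
              have h4 := Finset.mem_filter.not.mp hsE
              push_neg at h4
              exact h4 (Finset.mem_univ s)
            have hceil : ((⌈(m : ℝ) * π s⌉ : ℝ)) < (m : ℝ) * π s + 1 := Int.ceil_lt_add_one _
            have hcz : ((c s : ℤ) : ℝ) = ((⌈(m : ℝ) * π s⌉ : ℤ) : ℝ) - 1 - (N s : ℝ) := by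
              simp only [hc]
              push_cast
              ring
            rw [hcz]
            nlinarith
        calc ((∑ s, max 0 (c s)) : ℝ) = ∑ s, ((max 0 (c s) : ℤ) : ℝ) := by push_cast; ring
          _ ≤ ∑ s, ((m : ℝ) - k - 1) * π s := Finset.sum_le_sum hterm
          _ = ((m : ℝ) - k - 1) * ∑ s, π s := by rw [Finset.mul_sum]
          _ = ((m : ℝ) - k - 1) := by rw [hπ1, mul_one]
      have hTle : (∑ s, max 0 (c s)) ≤ (m : ℤ) - k - 1 := by exact_mod_cast hbound
      have h0 : max 0 (c a - 1) = 0 := max_eq_left (by omega)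
      have h0' : max 0 (c a) = 0 := max_eq_left (by omega)
      rw [h0]
      rw [hsplitT, h0'] at hTle
      push_cast
      omega

variable (π : S → ℝ)

/-- The recursively constructed count vectors together with their invariant. -/
noncomputable def chain (hπ0 : ∀ s, 0 ≤ π s) (hπ1 : ∑ s, π s = 1) :
    (k : ℕ) → {N : S → ℕ // good π k N}
  | 0 => ⟨fun _ => 0, good_zero π hπ0 hπ1⟩
  | (k + 1) =>
    let p := chain hπ0 hπ1 k
    ⟨Function.update p.1 (Classical.choose (good_step π hπ0 hπ1 k p.1 p.2))
        (p.1 (Classical.choose (good_step π hπ0 hπ1 k p.1 p.2)) + 1),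
      Classical.choose_spec (good_step π hπ0 hπ1 k p.1 p.2)⟩

/-- The constructed sequence. -/
noncomputable def theSeq (hπ0 : ∀ s, 0 ≤ π s) (hπ1 : ∑ s, π s = 1) (k : ℕ) : S :=
  Classical.choose (good_step π hπ0 hπ1 k (chain π hπ0 hπ1 k).1 (chain π hπ0 hπ1 k).2)

lemma chain_succ (hπ0 : ∀ s, 0 ≤ π s) (hπ1 : ∑ s, π s = 1) (k : ℕ) :
    (chain π hπ0 hπ1 (k + 1)).1 =
      Function.update (chain π hπ0 hπ1 k).1 (theSeq π hπ0 hπ1 k)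
        ((chain π hπ0 hπ1 k).1 (theSeq π hπ0 hπ1 k) + 1) := by
  rfl

lemma chain_card (hπ0 : ∀ s, 0 ≤ π s) (hπ1 : ∑ s, π s = 1) (k : ℕ) (s : S) :
    (((Finset.range k).filter (fun i => theSeq π hπ0 hπ1 i = s)).card) =
      (chain π hπ0 hπ1 k).1 s := by
  induction k with
  | zero => simp [chain]
  | succ n ih =>
    rw [Finset.range_add_one, Finset.filter_insert, chain_succ]
    by_cases h : theSeq π hπ0 hπ1 n = s
    · rw [if_pos h, Finset.card_insert_of_notMem (by simp), ih, ← h,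
        Function.update_self]
    · rw [if_neg h, ih, Function.update_of_ne (fun hs => h hs.symm)]

end aux

/-- **Theorem 1 (Holroyd–Propp).** Given a probability distribution `π` on a finite
nonempty set `S`, there is an infinite sequence `s₁, s₂, …` in `S` (here `seq k` is
`s_{k+1}`) such that for all `k ≥ 1` and all `s ∈ S`, the number `N_k(s)` of indices
`i ∈ [1,k]` with `s_i = s` satisfies `|N_k(s) - k·π(s)| ≤ 1`. -/
theorem stmt_0 {S : Type*} [Fintype S] [DecidableEq S] [Nonempty S]
    (π : S → ℝ) (hπ0 : ∀ s, 0 ≤ π s) (hπ1 : ∑ s, π s = 1) :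
    ∃ seq : ℕ → S, ∀ k : ℕ, 1 ≤ k → ∀ s : S,
      |(((Finset.range k).filter (fun i => seq i = s)).card : ℝ) - k * π s| ≤ 1 := by
  refine ⟨theSeq π hπ0 hπ1, fun k _ s => ?_⟩
  rw [chain_card π hπ0 hπ1 k s]
  obtain ⟨hsum, hup, hneed⟩ := (chain π hπ0 hπ1 k).2
  set N := (chain π hπ0 hπ1 k).1 with hN
  -- lower quota from the Hall condition at m = k
  have hlow : (k : ℝ) * π s - 1 ≤ (N s : ℝ) := by
    have h0 := hneed k le_rfl
    have hterm : max 0 (⌈(k : ℝ) * π s⌉ - 1 - (N s : ℤ)) ≤ 0 := by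
      have hsingle : max 0 (⌈(k : ℝ) * π s⌉ - 1 - (N s : ℤ))
          ≤ ∑ t, max 0 (⌈(k : ℝ) * π t⌉ - 1 - (N t : ℤ)) :=
        Finset.single_le_sum
          (f := fun t => max 0 (⌈(k : ℝ) * π t⌉ - 1 - (N t : ℤ)))
          (fun t _ => le_max_left _ _) (Finset.mem_univ s)
      omega
    have hc : ⌈(k : ℝ) * π s⌉ ≤ (N s : ℤ) + 1 := by omega
    have := Int.ceil_le.mp hc
    push_cast at this
    linarith
  have hupper := hup s
  rw [abs_le]
  constructor <;> linarith
end

section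
/- Given discrete probability distributions π₁, π₂, … on a countable set S, there exists an infinite sequence s₁, s₂, … of elements of S such that for every integer k ≥ 1 and every s ∈ S, the quantities N_k(s) := #{i : 1 ≤ i ≤ k and s_i = s} and P_k(s) := ∑_{i=1}^k π_i(s) satisfy |N_k(s) − P_k(s)| < 1. -/
set_option linter.unusedSectionVars false

section Aux
variable {S : Type*} [Countable S] [DecidableEq S] [Nonempty S]

/-- partial sums `P_k(s)`. -/
def Pp (π : ℕ → S → ℝ) (k : ℕ) (s : S) : ℝ := ∑ i ∈ Finset.range k, π i s

/-- counts `N_k(s)` for a sequence `f`. -/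
def Nc (f : ℕ → S) (k : ℕ) (s : S) : ℕ :=
  ((Finset.range k).filter (fun i => f i = s)).card

lemma Nc_succ (f : ℕ → S) (k : ℕ) (s : S) :
    Nc f (k+1) s = Nc f k s + (if f k = s then 1 else 0) := by
  unfold Nc
  rw [Finset.range_add_one, Finset.filter_insert]
  split
  · rw [Finset.card_insert_of_notMem (by simp)]
  · simp

lemma Nc_mono (f : ℕ → S) {k k' : ℕ} (h : k ≤ k') (s : S) : Nc f k s ≤ Nc f k' s :=
  Finset.card_le_card (Finset.filter_subset_filter _ (Finset.range_subset_range.2 h))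

variable {π : ℕ → S → ℝ}

lemma Pp_mono (hπ0 : ∀ i s, 0 ≤ π i s) {k k' : ℕ} (h : k ≤ k') (s : S) :
    Pp π k s ≤ Pp π k' s := by
  unfold Pp
  exact Finset.sum_le_sum_of_subset_of_nonneg (Finset.range_subset_range.2 h)
    (fun i _ _ => hπ0 i s)

lemma Pp_nonneg (hπ0 : ∀ i s, 0 ≤ π i s) (k : ℕ) (s : S) : 0 ≤ Pp π k s :=
  Finset.sum_nonneg fun i _ => hπ0 i s

lemma summable_pi (hπ1 : ∀ i, ∑' s, π i s = 1) (i : ℕ) : Summable (π i) := by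
  by_contra h
  have := tsum_eq_zero_of_not_summable h
  rw [hπ1 i] at this
  norm_num at this

lemma summable_Pp (hπ1 : ∀ i, ∑' s, π i s = 1) (k : ℕ) : Summable (Pp π k) := by
  unfold Pp
  exact summable_sum (fun i _ => summable_pi hπ1 i)

lemma tsum_Pp (hπ1 : ∀ i, ∑' s, π i s = 1) (k : ℕ) : ∑' s, Pp π k s = k := by
  unfold Pp
  rw [Summable.tsum_finsetSum (fun i _ => summable_pi hπ1 i)]
  simp [hπ1]

lemma pi_le_one (hπ0 : ∀ i s, 0 ≤ π i s) (hπ1 : ∀ i, ∑' s, π i s = 1) (i : ℕ) (s : S) :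
    π i s ≤ 1 := by
  have := Summable.le_tsum (summable_pi hπ1 i) s (fun b _ => hπ0 i b)
  rwa [hπ1 i] at this

lemma tsum_Nc (f : ℕ → S) (k : ℕ) :
    ∑' s, (Nc f k s : ℝ) = k := by
  classical
  set T := (Finset.range k).image f with hT
  have hsupp : ∀ s ∉ T, (Nc f k s : ℝ) = 0 := by
    intro s hs
    have : (Finset.range k).filter (fun i => f i = s) = ∅ := by
      rw [Finset.filter_eq_empty_iff]
      intro i hi he
      exact hs (Finset.mem_image.2 ⟨i, hi, he⟩)
    simp [Nc, this]
  rw [tsum_eq_sum hsupp]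
  have := Finset.card_eq_sum_card_fiberwise
    (f := f) (s := Finset.range k) (t := T)
    (fun x hx => Finset.mem_image_of_mem f hx)
  rw [Finset.card_range] at this
  rw [← Nat.cast_sum]
  norm_cast
  exact this.symm

/-- The greedy EDF pick property: `s` is "released" (its count is below `P_{k+1}`),
and among released states it has the earliest "deadline". -/
def IsPick (π : ℕ → S → ℝ) (k : ℕ) (f : ℕ → S) (s : S) : Prop :=
  (Nc f k s : ℝ) < Pp π (k+1) s ∧
  ∀ s' : S, (Nc f k s' : ℝ) < Pp π (k+1) s' →
    ∀ m : ℕ, (Nc f k s' : ℝ) + 1 ≤ Pp π m s' →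
      ∃ m' ≤ m, (Nc f k s : ℝ) + 1 ≤ Pp π m' s

lemma exists_released (hπ1 : ∀ i, ∑' s, π i s = 1) (f : ℕ → S) (k : ℕ) :
    ∃ s, (Nc f k s : ℝ) < Pp π (k+1) s := by
  by_contra h
  push_neg at h
  have h1 : ∑' s, Pp π (k+1) s ≤ ∑' s, (Nc f k s : ℝ) := by
    refine Summable.tsum_le_tsum h (summable_Pp hπ1 (k+1)) ?_
    · -- summable of Nc : finite support
      apply summable_of_ne_finset_zero (s := (Finset.range k).image f)
      intro s hs
      have : (Finset.range k).filter (fun i => f i = s) = ∅ := by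
        rw [Finset.filter_eq_empty_iff]
        intro i hi he
        exact hs (Finset.mem_image.2 ⟨i, hi, he⟩)
      simp [Nc, this]
  rw [tsum_Pp hπ1 (k+1), tsum_Nc f k] at h1
  push_cast at h1
  linarith

lemma exists_isPick (hπ1 : ∀ i, ∑' s, π i s = 1) (f : ℕ → S) (k : ℕ) :
    ∃ s, IsPick π k f s := by
  by_cases hd : ∃ m : ℕ, ∃ s : S, ((Nc f k s : ℝ) < Pp π (k+1) s) ∧
      (Nc f k s : ℝ) + 1 ≤ Pp π m s
  · classical
    obtain ⟨s, hrel, hdue⟩ := Nat.find_spec hd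
    refine ⟨s, hrel, fun s' hrel' m hdue' => ⟨Nat.find hd, ?_, hdue⟩⟩
    exact Nat.find_min' hd ⟨s', hrel', hdue'⟩
  · obtain ⟨s, hrel⟩ := exists_released hπ1 f k
    push_neg at hd
    exact ⟨s, hrel, fun s' hrel' m hdue' => absurd hdue' (not_le.2 (hd m s' hrel'))⟩

open Classical in
noncomputable def pick (π : ℕ → S → ℝ) (k : ℕ) (f : ℕ → S) : S :=
  if h : ∃ s, IsPick π k f s then h.choose else Classical.arbitrary S

lemma pick_isPick (hπ1 : ∀ i, ∑' s, π i s = 1) (f : ℕ → S) (k : ℕ) :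
    IsPick π k f (pick π k f) := by
  unfold pick
  rw [dif_pos (exists_isPick hπ1 f k)]
  exact (exists_isPick hπ1 f k).choose_spec

noncomputable def seqAux (π : ℕ → S → ℝ) : ℕ → ℕ → S
  | 0 => fun _ => Classical.arbitrary S
  | (k+1) => Function.update (seqAux π k) k (pick π k (seqAux π k))

/-- The greedy sequence. -/
noncomputable def gseq (π : ℕ → S → ℝ) (k : ℕ) : S := seqAux π (k+1) k

lemma seqAux_eq_gseq (π : ℕ → S → ℝ) : ∀ k, ∀ i < k, seqAux π k i = gseq π i := by
  intro k
  induction k with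
  | zero => intro i hi; omega
  | succ k ih =>
    intro i hi
    rcases Nat.lt_succ_iff_lt_or_eq.1 hi with h | h
    · show Function.update (seqAux π k) k (pick π k (seqAux π k)) i = _
      rw [Function.update_of_ne (by omega)]
      exact ih i h
    · subst h; rfl

lemma Nc_seqAux (π : ℕ → S → ℝ) (k : ℕ) (s : S) :
    Nc (seqAux π k) k s = Nc (gseq π) k s := by
  unfold Nc
  congr 1
  apply Finset.filter_congr
  intro i hi
  rw [seqAux_eq_gseq π k i (Finset.mem_range.1 hi)]

lemma gseq_eq_pick (π : ℕ → S → ℝ) (k : ℕ) : gseq π k = pick π k (seqAux π k) := by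
  show Function.update (seqAux π k) k (pick π k (seqAux π k)) k = _
  rw [Function.update_self]

/-- The pick property restated for `gseq` itself. -/
lemma gseq_isPick (hπ1 : ∀ i, ∑' s, π i s = 1) (k : ℕ) :
    (Nc (gseq π) k (gseq π k) : ℝ) < Pp π (k+1) (gseq π k) ∧
    ∀ s' : S, (Nc (gseq π) k s' : ℝ) < Pp π (k+1) s' →
      ∀ m : ℕ, (Nc (gseq π) k s' : ℝ) + 1 ≤ Pp π m s' →
        ∃ m' ≤ m, (Nc (gseq π) k (gseq π k) : ℝ) + 1 ≤ Pp π m' (gseq π k) := by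
  have h := pick_isPick (π := π) hπ1 (seqAux π k) k
  rw [← gseq_eq_pick] at h
  constructor
  · have := h.1; rwa [Nc_seqAux] at this
  · intro s' h1 m h2
    have := h.2 s' (by rwa [Nc_seqAux]) m (by rwa [Nc_seqAux])
    simpa [Nc_seqAux] using this

/-- Upper bound: `N_k(s) < P_k(s) + 1`. -/
lemma Nc_lt_Pp_add_one (hπ0 : ∀ i s, 0 ≤ π i s) (hπ1 : ∀ i, ∑' s, π i s = 1)
    (k : ℕ) (s : S) : (Nc (gseq π) k s : ℝ) < Pp π k s + 1 := by
  induction k with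
  | zero => simp [Nc, Pp]
  | succ k ih =>
    rw [Nc_succ]
    by_cases h : gseq π k = s
    · have h1 := (gseq_isPick hπ1 k).1
      rw [h] at h1
      simp only [h, if_pos]
      push_cast
      linarith
    · have h2 := Pp_mono hπ0 (Nat.le_succ k) s
      simp only [h, if_neg, if_false]
      push_cast
      linarith

/-- Lower bound ("no deadline is missed"): `P_m(s) < N_m(s) + 1`. -/
lemma Pp_lt_Nc_add_one (hπ0 : ∀ i s, 0 ≤ π i s) (hπ1 : ∀ i, ∑' s, π i s = 1)
    (m : ℕ) (s₀ : S) : Pp π m s₀ < (Nc (gseq π) m s₀ : ℝ) + 1 := by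
  by_contra hbad
  push_neg at hbad
  -- hbad : N m s₀ + 1 ≤ P m s₀
  classical
  set f := gseq π with hf
  -- Good k : the job executed at step k has "deadline ≤ m"
  set Good : ℕ → Prop := fun k => (Nc f k (f k) : ℝ) + 1 ≤ Pp π m (f k) with hGoodDef
  have hQ : ∃ t, t ≤ m ∧ ∀ k, t ≤ k → k < m → Good k := ⟨m, le_refl m, by omega⟩
  set t₀ := Nat.find hQ with ht₀def
  obtain ⟨htm, hGood⟩ := Nat.find_spec hQ
  rw [← ht₀def] at htm hGood
  -- Claim A : every job with deadline ≤ m unfinished at t₀ was released after t₀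
  have claimA : ∀ s : S, (Nc f t₀ s : ℝ) + 1 ≤ Pp π m s → Pp π t₀ s ≤ (Nc f t₀ s : ℝ) := by
    intro s hs
    by_contra hc
    push_neg at hc
    rcases Nat.eq_zero_or_eq_succ_pred t₀ with h0 | hsucc
    · rw [h0] at hc
      simp [Pp, Nc] at hc
    · set t' := t₀ - 1 with ht'
      have htt : t₀ = t' + 1 := hsucc
      have hmin : ¬ (t' ≤ m ∧ ∀ k, t' ≤ k → k < m → Good k) :=
        Nat.find_min hQ (by omega)
      have hnotGood : ¬ Good t' := by
        intro hg
        apply hmin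
        refine ⟨by omega, fun k hk hkm => ?_⟩
        rcases Nat.eq_or_lt_of_le hk with h | h
        · rwa [← h]
        · exact hGood k (by omega) hkm
      rw [hGoodDef] at hnotGood
      push_neg at hnotGood
      -- hnotGood : P m (f t') < N t' (f t') + 1
      by_cases hsc : f t' = s
      · -- the step-t' pick equals s
        have hstep : Nc f (t'+1) s = Nc f t' s + 1 := by
          rw [Nc_succ, if_pos hsc]
        rw [htt, hstep] at hs
        rw [hsc] at hnotGood
        have : (Nc f t' s : ℝ) ≤ Nc f t₀ s := by
          exact_mod_cast Nat.cast_le.2 (Nc_mono f (by omega) s)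
        push_cast at hs
        have hmono := Pp_mono hπ0 (le_refl m) s
        linarith
      · have hstep : Nc f (t'+1) s = Nc f t' s := by
          rw [Nc_succ, if_neg hsc]; ring
        have hNeq : Nc f t' s = Nc f t₀ s := by rw [htt]; exact hstep.symm
        have hrel : (Nc f t' s : ℝ) < Pp π (t'+1) s := by
          rw [hNeq, ← htt]; exact hc
        have hdue : (Nc f t' s : ℝ) + 1 ≤ Pp π m s := by
          rw [hNeq]; exact hs
        obtain ⟨m', hm'le, hdue'⟩ := (gseq_isPick hπ1 t').2 s hrel m hdue
        have := Pp_mono hπ0 hm'le (f t')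
        rw [← hf] at *
        linarith
  -- the finite set of states with `P_m(s) ≥ 1`
  have hfin : {s : S | ¬ Pp π m s < 1}.Finite := by
    have hsum := (summable_Pp hπ1 m).tendsto_cofinite_zero
    have h2 : ∀ᶠ s in Filter.cofinite, Pp π m s < 1 :=
      hsum.eventually_lt_const (by norm_num)
    exact Filter.eventually_cofinite.1 h2
  set F : Finset S := hfin.toFinset with hF
  have hmemF : ∀ s : S, 1 ≤ Pp π m s → s ∈ F := by
    intro s hs
    rw [hF, Set.Finite.mem_toFinset]
    exact not_lt.2 hs
  -- the target set of jobs
  set A : Finset (S × ℕ) :=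
    F.biUnion (fun s => (Finset.Ioc (Nc f t₀ s) (Nat.floor (Pp π m s))).image (Prod.mk s))
    with hA
  have hmemA : ∀ s : S, ∀ j : ℕ, Nc f t₀ s < j → (j : ℝ) ≤ Pp π m s → (s, j) ∈ A := by
    intro s j h1 h2
    rw [hA, Finset.mem_biUnion]
    refine ⟨s, hmemF s (le_trans (by exact_mod_cast Nat.one_le_cast.2 (by omega)) h2), ?_⟩
    rw [Finset.mem_image]
    exact ⟨j, Finset.mem_Ioc.2 ⟨h1, Nat.le_floor h2⟩, rfl⟩
  -- upper bound on the cardinality of A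
  have hAcard : (A.card : ℝ) ≤ (m : ℝ) - (t₀ : ℝ) := by
    have hdisj : ∀ x ∈ F, ∀ y ∈ F, x ≠ y →
        Disjoint ((Finset.Ioc (Nc f t₀ x) (Nat.floor (Pp π m x))).image (Prod.mk x))
          ((Finset.Ioc (Nc f t₀ y) (Nat.floor (Pp π m y))).image (Prod.mk y)) := by
      intro x _ y _ hxy
      simp only [Finset.disjoint_left, Finset.mem_image]
      rintro ⟨a, b⟩ ⟨j, _, hj⟩ ⟨j', _, hj'⟩
      cases hj; cases hj'; exact hxy rfl
    rw [hA, Finset.card_biUnion hdisj]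
    push_cast
    have hle : ∀ s ∈ F,
        ((((Finset.Ioc (Nc f t₀ s) (Nat.floor (Pp π m s))).image (Prod.mk s)).card : ℝ))
          ≤ Pp π m s - Pp π t₀ s := by
      intro s _
      rw [Finset.card_image_of_injective _ (fun a b h => by cases h; rfl), Nat.card_Ioc]
      by_cases h : Nat.floor (Pp π m s) ≤ Nc f t₀ s
      · rw [Nat.sub_eq_zero_of_le h]
        simpa using sub_nonneg.2 (Pp_mono hπ0 htm s)
      · push_neg at h
        have hfl : (Nat.floor (Pp π m s) : ℝ) ≤ Pp π m s :=
          Nat.floor_le (Pp_nonneg hπ0 m s)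
        have hged : (Nc f t₀ s : ℝ) + 1 ≤ Pp π m s := by
          have : (Nc f t₀ s : ℝ) + 1 ≤ (Nat.floor (Pp π m s) : ℝ) := by
            exact_mod_cast Nat.succ_le_of_lt h
          linarith
        have hPt := claimA s hged
        rw [Nat.cast_sub (le_of_lt h)]
        linarith
    calc (∑ s ∈ F, (((Finset.Ioc (Nc f t₀ s) (Nat.floor (Pp π m s))).image (Prod.mk s)).card : ℝ))
        ≤ ∑ s ∈ F, (Pp π m s - Pp π t₀ s) := Finset.sum_le_sum hle
      _ ≤ ∑' s, (Pp π m s - Pp π t₀ s) := by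
          refine Summable.sum_le_tsum F (fun s _ => sub_nonneg.2 (Pp_mono hπ0 htm s)) ?_
          exact (summable_Pp hπ1 m).sub (summable_Pp hπ1 t₀)
      _ = (m : ℝ) - (t₀ : ℝ) := by
          rw [Summable.tsum_sub (summable_Pp hπ1 m) (summable_Pp hπ1 t₀),
            tsum_Pp hπ1 m, tsum_Pp hπ1 t₀]
  -- the executed jobs plus the missed job inject into A
  set g : ℕ → S × ℕ := fun k => (f k, Nc f (k+1) (f k)) with hg
  have hgA : ∀ k, t₀ ≤ k → k < m → g k ∈ A := by
    intro k h1 h2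
    have hGk := hGood k h1 h2
    rw [hGoodDef] at hGk
    have hstep : Nc f (k+1) (f k) = Nc f k (f k) + 1 := by rw [Nc_succ, if_pos rfl]
    apply hmemA
    · rw [hstep]
      have := Nc_mono f h1 (f k)
      omega
    · rw [hstep]; push_cast; linarith
  have hginj : Set.InjOn g (Finset.Ico t₀ m) := by
    have key : ∀ k k', k < k' → g k ≠ g k' := by
      intro k k' h2 heq
      have hs : f k = f k' := congrArg Prod.fst heq
      have hN : Nc f (k+1) (f k) = Nc f (k'+1) (f k') := congrArg Prod.snd heq
      have hstep' : Nc f (k'+1) (f k') = Nc f k' (f k') + 1 := by rw [Nc_succ, if_pos rfl]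
      have hmono : Nc f (k+1) (f k') ≤ Nc f k' (f k') := Nc_mono f (by omega) (f k')
      rw [hs] at hN
      omega
    intro k _ k' _ heq
    rcases lt_trichotomy k k' with h|h|h
    · exact absurd heq (key k k' h)
    · exact h
    · exact absurd heq.symm (key k' k h)
  set e : S × ℕ := (s₀, Nc f m s₀ + 1) with he
  have heA : e ∈ A := by
    apply hmemA
    · have := Nc_mono f htm s₀; omega
    · push_cast; linarith
  have henotin : e ∉ (Finset.Ico t₀ m).image g := by
    rw [Finset.mem_image]
    rintro ⟨k, hk, hgk⟩
    rw [Finset.mem_Ico] at hk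
    have hs : f k = s₀ := congrArg Prod.fst hgk
    have hN : Nc f (k+1) (f k) = Nc f m s₀ + 1 := congrArg Prod.snd hgk
    rw [hs] at hN
    have : Nc f (k+1) s₀ ≤ Nc f m s₀ := Nc_mono f (by omega) s₀
    omega
  have hsub : insert e ((Finset.Ico t₀ m).image g) ⊆ A := by
    intro x hx
    rcases Finset.mem_insert.1 hx with h | h
    · rw [h]; exact heA
    · rw [Finset.mem_image] at h
      obtain ⟨k, hk, hgk⟩ := h
      rw [Finset.mem_Ico] at hk
      rw [← hgk]
      exact hgA k hk.1 hk.2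
  have hcard : (m - t₀) + 1 ≤ A.card := by
    have h1 : (insert e ((Finset.Ico t₀ m).image g)).card = ((Finset.Ico t₀ m).image g).card + 1 :=
      Finset.card_insert_of_notMem henotin
    have h2 : ((Finset.Ico t₀ m).image g).card = m - t₀ := by
      rw [Finset.card_image_of_injOn hginj, Nat.card_Ico]
    have := Finset.card_le_card hsub
    omega
  have hcast : ((m - t₀ : ℕ) : ℝ) = (m : ℝ) - t₀ := by
    rw [Nat.cast_sub htm]
  have : ((m - t₀ : ℕ) : ℝ) + 1 ≤ (A.card : ℝ) := by exact_mod_cast hcard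
  rw [hcast] at this
  linarith

end Aux

/-- **Theorem 2.** Given discrete probability distributions `π₁, π₂, …` on a countable
nonempty set `S` (here `π i` is `π_{i+1}`), there is an infinite sequence `s₁, s₂, …`
in `S` (here `seq k` is `s_{k+1}`) such that for all `k ≥ 1` and all `s ∈ S`,
`N_k(s) := #{i ∈ [1,k] : s_i = s}` and `P_k(s) := ∑_{i=1}^k π_i(s)` satisfy
`|N_k(s) - P_k(s)| < 1`. -/
theorem stmt_1 {S : Type*} [Countable S] [DecidableEq S] [Nonempty S]
    (π : ℕ → S → ℝ) (hπ0 : ∀ i s, 0 ≤ π i s) (hπ1 : ∀ i, ∑' s, π i s = 1) :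
    ∃ seq : ℕ → S, ∀ k : ℕ, 1 ≤ k → ∀ s : S,
      |(((Finset.range k).filter (fun i => seq i = s)).card : ℝ)
        - ∑ i ∈ Finset.range k, π i s| < 1 := by
  refine ⟨gseq π, fun k _ s => ?_⟩
  have h1 := Nc_lt_Pp_add_one hπ0 hπ1 k s
  have h2 := Pp_lt_Nc_add_one hπ0 hπ1 k s
  rw [abs_lt]
  constructor
  · have : Pp π k s - (Nc (gseq π) k s : ℝ) < 1 := by linarith
    simpa [Nc, Pp] using (by linarith : -1 < (Nc (gseq π) k s : ℝ) - Pp π k s)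
  · simpa [Nc, Pp] using (by linarith : (Nc (gseq π) k s : ℝ) - Pp π k s < 1)
end

section
/- For any probability vector π ∈ ℝⁿ there exists a compact set K ⊆ [−1,1]ⁿ containing the origin (0,…,0) such that K ⊆ ⋃_{i=1}^n (K + π − e_i), where e₁,…,e_n is the standard basis of ℝⁿ. -/
open Finset

namespace Stmt2Aux

variable {n : ℕ}

/-- Eligible set at step `s` given counts `c`: indices still below quota for house size `s+1`. -/
noncomputable def elig (π : Fin n → ℝ) (s : ℕ) (c : Fin n → ℕ) : Finset (Fin n) :=
  letI := Classical.dec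
  Finset.univ.filter fun j => (c j : ℝ) < ((s : ℝ) + 1) * π j

/-- Quota method choice: among eligible indices, pick one minimizing `(c j + 1)/π j`. -/
noncomputable def pick (π : Fin n → ℝ) (hn : 0 < n) (s : ℕ) (c : Fin n → ℕ) : Fin n :=
  if h : (elig π s c).Nonempty then
    ((elig π s c).exists_min_image (fun j => ((c j : ℝ) + 1) / π j) h).choose
  else ⟨0, hn⟩

lemma pick_spec (π : Fin n → ℝ) (hn : 0 < n) (s : ℕ) (c : Fin n → ℕ)
    (h : (elig π s c).Nonempty) :
    pick π hn s c ∈ elig π s c ∧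
      ∀ j ∈ elig π s c,
        ((c (pick π hn s c) : ℝ) + 1) / π (pick π hn s c) ≤ ((c j : ℝ) + 1) / π j := by
  rw [pick, dif_pos h]
  have hs := ((elig π s c).exists_min_image (fun j => ((c j : ℝ) + 1) / π j) h).choose_spec
  exact ⟨hs.1, hs.2⟩

/-- The schedule: counts after `s` steps. -/
noncomputable def sched (π : Fin n → ℝ) (hn : 0 < n) : ℕ → Fin n → ℕ
  | 0 => fun _ => 0
  | s + 1 => fun j =>
      sched π hn s j + if j = pick π hn s (sched π hn s) then 1 else 0

section Props

variable (π : Fin n → ℝ) (hn : 0 < n)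

lemma sched_le_succ (s : ℕ) (j : Fin n) : sched π hn s j ≤ sched π hn (s + 1) j := by
  simp only [sched]; exact Nat.le_add_right _ _

lemma sched_succ_pick (s : ℕ) :
    sched π hn (s + 1) (pick π hn s (sched π hn s))
      = sched π hn s (pick π hn s (sched π hn s)) + 1 := by
  simp [sched]

lemma sched_succ_ne (s : ℕ) (j : Fin n) (h : j ≠ pick π hn s (sched π hn s)) :
    sched π hn (s + 1) j = sched π hn s j := by
  simp [sched, h]

lemma sched_sum (s : ℕ) : ∑ j, sched π hn s j = s := by
  induction s with
  | zero => simp [sched]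
  | succ s ih =>
      simp only [sched, Finset.sum_add_distrib, ih, Finset.sum_ite_eq' Finset.univ,
        Finset.mem_univ, if_true]

variable (hπ0 : ∀ i, 0 ≤ π i) (hπ1 : ∑ i, π i = 1)

include hπ0 hπ1

lemma elig_nonempty (s : ℕ) : (elig π s (sched π hn s)).Nonempty := by
  by_contra h
  rw [Finset.not_nonempty_iff_eq_empty, elig, Finset.filter_eq_empty_iff] at h
  have h2 : ∀ j ∈ Finset.univ, ((s : ℝ) + 1) * π j ≤ (sched π hn s j : ℝ) := by
    intro j _
    have := h (Finset.mem_univ j)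
    push_neg at this
    exact this
  have h3 : ((s : ℝ) + 1) ≤ (s : ℝ) := by
    calc ((s : ℝ) + 1) = ∑ j, ((s : ℝ) + 1) * π j := by
          rw [← Finset.mul_sum, hπ1, mul_one]
      _ ≤ ∑ j, (sched π hn s j : ℝ) := Finset.sum_le_sum h2
      _ = (s : ℝ) := by rw [← Nat.cast_sum, sched_sum]
  linarith

lemma sched_upper (s : ℕ) (j : Fin n) : (sched π hn s j : ℝ) ≤ s * π j + 1 := by
  induction s with
  | zero => simp [sched]
  | succ s ih =>
      have hspec := pick_spec π hn s (sched π hn s) (elig_nonempty π hn hπ0 hπ1 s)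
      by_cases hj : j = pick π hn s (sched π hn s)
      · subst hj
        have helig := hspec.1
        rw [elig, Finset.mem_filter] at helig
        have h2 := helig.2
        rw [sched_succ_pick]
        push_cast
        push_cast at h2
        linarith
      · rw [sched_succ_ne π hn s j hj]
        have : (s : ℝ) * π j ≤ ((s : ℝ) + 1) * π j := by nlinarith [hπ0 j]
        push_cast
        linarith

/-- The key lower-quota lemma for the quota method. -/
lemma sched_lower (t : ℕ) (k : Fin n) :
    (t : ℝ) * π k - 1 ≤ (sched π hn t k : ℝ) := by
  by_contra hcon
  push_neg at hcon
  set a : ℕ → Fin n → ℕ := sched π hn with ha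
  set i : ℕ → Fin n := fun s => pick π hn s (a s) with hi
  have hak : (0 : ℝ) ≤ (a t k : ℝ) := by positivity
  have hπk : 0 < π k := by
    rcases (hπ0 k).lt_or_eq with h | h
    · exact h
    · exfalso
      rw [← h] at hcon
      simp only [mul_zero, zero_sub] at hcon
      linarith
  set T : ℝ := ((a t k : ℝ) + 1) / π k with hT
  have hT_mul : T * π k = (a t k : ℝ) + 1 := div_mul_cancel₀ _ (ne_of_gt hπk)
  have hTt : T < t := by
    rw [hT, div_lt_iff₀ hπk]; linarith
  have hT0 : 0 < T := div_pos (by linarith) hπk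
  -- bad steps: steps where the chosen index has deadline beyond T
  classical
  set B : Finset ℕ :=
    (Finset.range t).filter (fun s => T * π (i s) < (a s (i s) : ℝ) + 1) with hB
  have hBmem : ∀ s, s ∈ B ↔ s < t ∧ T * π (i s) < (a s (i s) : ℝ) + 1 := by
    intro s
    rw [hB, Finset.mem_filter, Finset.mem_range]
  obtain ⟨s₀, hs₀t, hgood, hcase⟩ :
      ∃ s₀ : ℕ, s₀ ≤ t ∧
        (∀ s, s₀ ≤ s → s < t → (a s (i s) : ℝ) + 1 ≤ T * π (i s)) ∧
        (∀ j, ((⌊T * π j⌋ : ℤ) ≤ (a s₀ j : ℤ)) ∨ ((s₀ : ℝ) * π j ≤ (a s₀ j : ℝ))) := by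
    by_cases hBne : B.Nonempty
    · set M := B.max' hBne with hM
      have hMmem := (hBmem M).mp (B.max'_mem hBne)
      refine ⟨M + 1, hMmem.1, ?_, ?_⟩
      · intro s hs1 hs2
        by_contra hbad
        push_neg at hbad
        have hsB : s ∈ B := (hBmem s).mpr ⟨hs2, hbad⟩
        have := B.le_max' s hsB
        omega
      · intro j
        by_cases helig : j ∈ elig π M (a M)
        · left
          have hspec := pick_spec π hn M (a M) ⟨j, helig⟩
          have hielig := hspec.1
          have hmin := hspec.2 j helig
          rw [elig, Finset.mem_filter] at hielig helig
          have hielig2 : (a M (i M) : ℝ) < ((M : ℝ) + 1) * π (i M) := hielig.2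
          have helig2 : (a M j : ℝ) < ((M : ℝ) + 1) * π j := helig.2
          have hai0 : (0:ℝ) ≤ (a M (i M) : ℝ) := by positivity
          have haj0 : (0:ℝ) ≤ (a M j : ℝ) := by positivity
          have hπi : 0 < π (i M) := by nlinarith
          have hπj : 0 < π j := by nlinarith
          have hbadM : T * π (i M) < (a M (i M) : ℝ) + 1 := hMmem.2
          have h1 : T < ((a M (i M) : ℝ) + 1) / π (i M) := by
            rw [lt_div_iff₀ hπi]; exact hbadM
          have h2 : T < ((a M j : ℝ) + 1) / π j := lt_of_lt_of_le h1 hmin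
          have h3 : T * π j < (a M j : ℝ) + 1 := by
            rw [lt_div_iff₀ hπj] at h2; exact h2
          have h4 : (⌊T * π j⌋ : ℤ) < (a M j : ℤ) + 1 := by
            apply Int.floor_lt.mpr
            push_cast
            linarith
          have h5 : (a M j : ℤ) ≤ (a (M + 1) j : ℤ) := by
            exact_mod_cast sched_le_succ π hn M j
          omega
        · right
          rw [elig, Finset.mem_filter] at helig
          push_neg at helig
          have h1 : ((M : ℝ) + 1) * π j ≤ (a M j : ℝ) := helig (Finset.mem_univ j)
          have h2 : (a M j : ℝ) ≤ (a (M + 1) j : ℝ) := by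
            exact_mod_cast sched_le_succ π hn M j
          push_cast
          linarith
    · refine ⟨0, Nat.zero_le t, ?_, fun j => Or.inr (by simp [sched, ha])⟩
      intro s hs1 hs2
      by_contra hbad
      push_neg at hbad
      exact hBne ⟨s, (hBmem s).mpr ⟨hs2, hbad⟩⟩
  -- F1: counts at time t are bounded by max of counts at s₀ and ⌊T π j⌋
  have F1 : ∀ v, s₀ ≤ v → v ≤ t → ∀ j, (a v j : ℤ) ≤ max ((a s₀ j : ℤ)) ⌊T * π j⌋ := by
    intro v hv
    induction v, hv using Nat.le_induction with
    | base => intro _ j; exact le_max_left _ _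
    | succ v hv ih =>
        intro hvt j
        have hvlt : v < t := by omega
        have ihj := ih (le_of_lt hvlt) j
        by_cases hj : j = i v
        · have hg := hgood v hv hvlt
          have hj' : j = pick π hn v (sched π hn v) := hj
          have hthis : (a (v + 1) j : ℤ) ≤ ⌊T * π j⌋ := by
            apply Int.le_floor.mpr
            have hstep : a (v + 1) j = a v j + 1 := by
              rw [hj']; exact sched_succ_pick π hn v
            rw [hstep]
            push_cast
            rw [hj]
            exact hg
          exact le_trans hthis (le_max_right _ _)
        · have hstep : a (v + 1) j = a v j := sched_succ_ne π hn v j hj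
          rw [hstep]
          exact ihj
  -- Sum it all up
  have hfloor_k : ⌊T * π k⌋ = (a t k : ℤ) + 1 := by
    rw [hT_mul]
    have : ((a t k : ℝ) + 1) = (((a t k : ℤ) + 1 : ℤ) : ℝ) := by push_cast; ring
    rw [this, Int.floor_intCast]
  have key : ((t : ℤ) + 1) ≤ ∑ j, max ((a s₀ j : ℤ)) ⌊T * π j⌋ := by
    have h1 : ∀ j ∈ Finset.univ, ((a t j : ℤ) + if j = k then 1 else 0)
        ≤ max ((a s₀ j : ℤ)) ⌊T * π j⌋ := by
      intro j _
      by_cases hj : j = k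
      · subst hj
        simp only [if_true]
        have : (a t j : ℤ) + 1 ≤ ⌊T * π j⌋ := by rw [hfloor_k]
        exact le_trans this (le_max_right _ _)
      · simp only [hj, if_false, add_zero]
        exact F1 t hs₀t le_rfl j
    calc ((t : ℤ) + 1) = ∑ j, ((a t j : ℤ) + if j = k then 1 else 0) := by
          rw [Finset.sum_add_distrib, Finset.sum_ite_eq' Finset.univ, if_pos (Finset.mem_univ k)]
          have : ∑ j, (a t j : ℤ) = (t : ℤ) := by
            rw [← Nat.cast_sum]
            exact_mod_cast congrArg (Nat.cast : ℕ → ℤ) (sched_sum π hn t)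
          rw [this]
      _ ≤ _ := Finset.sum_le_sum h1
  have hreal : ∀ j ∈ Finset.univ, ((max ((a s₀ j : ℤ)) ⌊T * π j⌋ : ℤ) : ℝ)
      ≤ (a s₀ j : ℝ) + max (T - s₀) 0 * π j := by
    intro j _
    have hnn : 0 ≤ max (T - (s₀:ℝ)) 0 * π j :=
      mul_nonneg (le_max_right _ _) (hπ0 j)
    rw [Int.cast_max]
    apply max_le
    · push_cast; linarith
    · have hfl : ((⌊T * π j⌋ : ℤ) : ℝ) ≤ T * π j := Int.floor_le _
      rcases hcase j with hc | hc
      · have : ((⌊T * π j⌋ : ℤ) : ℝ) ≤ ((a s₀ j : ℤ) : ℝ) := by exact_mod_cast hc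
        push_cast at this ⊢
        linarith
      · have h6 : (T - (s₀:ℝ)) * π j ≤ max (T - (s₀:ℝ)) 0 * π j :=
          mul_le_mul_of_nonneg_right (le_max_left _ _) (hπ0 j)
        nlinarith
  have hfinal : ((t : ℝ) + 1) ≤ (s₀ : ℝ) + max (T - s₀) 0 := by
    have c1 : ((t : ℝ) + 1) ≤ ∑ j, ((max ((a s₀ j : ℤ)) ⌊T * π j⌋ : ℤ) : ℝ) := by
      exact_mod_cast key
    have c2 : ∑ j, ((max ((a s₀ j : ℤ)) ⌊T * π j⌋ : ℤ) : ℝ)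
        ≤ ∑ j, ((a s₀ j : ℝ) + max (T - s₀) 0 * π j) := Finset.sum_le_sum hreal
    have c3 : ∑ j, ((a s₀ j : ℝ) + max (T - s₀) 0 * π j)
        = (s₀ : ℝ) + max (T - s₀) 0 := by
      rw [Finset.sum_add_distrib, ← Finset.mul_sum, hπ1, mul_one]
      congr 1
      rw [← Nat.cast_sum, sched_sum]
    linarith
  have hs₀r : (s₀ : ℝ) ≤ t := Nat.cast_le.mpr hs₀t
  have : max (T - (s₀:ℝ)) 0 ≤ (t : ℝ) - s₀ := max_le (by linarith) (by linarith)
  linarith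

end Props

end Stmt2Aux

open Stmt2Aux in
/-- **Corollary 3.** For any probability vector `π ∈ ℝⁿ` there is a compact set
`K ⊆ [-1,1]ⁿ` containing the origin such that `K ⊆ ⋃_{i=1}^n (K + π - e_i)`,
where `e_i = Pi.single i 1` is the standard basis of `ℝⁿ`. -/
theorem stmt_2 (n : ℕ) (π : Fin n → ℝ) (hπ0 : ∀ i, 0 ≤ π i) (hπ1 : ∑ i, π i = 1) :
    ∃ K : Set (Fin n → ℝ), IsCompact K ∧ K ⊆ Set.Icc (-1 : Fin n → ℝ) 1 ∧
      (0 : Fin n → ℝ) ∈ K ∧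
      K ⊆ ⋃ i : Fin n, (fun x => x + (π - Pi.single i 1)) '' K := by
  have hn : 0 < n := by
    rcases Nat.eq_zero_or_pos n with h | h
    · subst h; simp at hπ1
    · exact h
  set a : ℕ → Fin n → ℕ := sched π hn with ha
  set x : ℕ → (Fin n → ℝ) := fun t j => (a t j : ℝ) - t * π j with hx
  have hxIcc : ∀ t, x t ∈ Set.Icc (-1 : Fin n → ℝ) 1 := by
    intro t
    constructor
    · intro j
      have := sched_lower π hn hπ0 hπ1 t j
      simp only [hx, Pi.neg_apply, Pi.one_apply]
      linarith
    · intro j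
      have := sched_upper π hn hπ0 hπ1 t j
      simp only [hx, Pi.one_apply]
      linarith
  set K : Set (Fin n → ℝ) := closure (Set.range x) with hK
  have hKIcc : K ⊆ Set.Icc (-1 : Fin n → ℝ) 1 := by
    apply closure_minimal _ isClosed_Icc
    rintro _ ⟨t, rfl⟩
    exact hxIcc t
  have hKcomp : IsCompact K := IsCompact.of_isClosed_subset isCompact_Icc isClosed_closure hKIcc
  refine ⟨K, hKcomp, hKIcc, ?_, ?_⟩
  · apply subset_closure
    refine ⟨0, ?_⟩
    funext j
    simp [hx, ha, sched]
  · -- covering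
    set U : Set (Fin n → ℝ) := ⋃ i : Fin n, (fun x => x + (π - Pi.single i 1)) '' K with hU
    have hUclosed : IsClosed U := by
      apply isClosed_iUnion_of_finite
      intro i
      exact (hKcomp.image (continuous_id.add continuous_const)).isClosed
    apply closure_minimal _ hUclosed
    rintro _ ⟨t, rfl⟩
    rw [hU, Set.mem_iUnion]
    refine ⟨pick π hn t (a t), x (t + 1), subset_closure ⟨t + 1, rfl⟩, ?_⟩
    funext j
    have hstep : (a (t + 1) j : ℝ)
        = (a t j : ℝ) + (if j = pick π hn t (a t) then 1 else 0) := by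
      simp only [ha, sched]
      split <;> push_cast <;> ring
    simp only [hx, Pi.add_apply, Pi.sub_apply, Pi.single_apply]
    rw [hstep]
    push_cast
    split <;> ring
end

section
/- Let π ∈ ℝⁿ be a probability vector and let K ⊆ [−1,1]ⁿ be a set containing the origin such that K ⊆ ⋃_{i=1}^n (K + π − e_i). Then there exists a sequence s₁, s₂, … taking values in {1,…,n} such that for every k ≥ 0 the discrepancy vector D_k, defined by D_k(i) := N_k(i) − k·π(i), lies in K; in particular |N_k(i) − k·π(i)| ≤ 1 for all k ≥ 1 and all i. -/
/-- If `π ∈ ℝⁿ` is a probability vector and `K ⊆ [-1,1]ⁿ` contains the origin and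
satisfies `K ⊆ ⋃_{i=1}^n (K + π - e_i)`, then there is a sequence `s₁, s₂, …` in
`{1,…,n}` (here `seq k` is `s_{k+1}`) such that every discrepancy vector
`D_k = (N_k(i) - k·π(i))_i` lies in `K`; in particular `|N_k(i) - k·π(i)| ≤ 1`
for all `k ≥ 1` and all `i`. -/
theorem stmt_3 (n : ℕ) (π : Fin n → ℝ) (hπ0 : ∀ i, 0 ≤ π i) (hπ1 : ∑ i, π i = 1)
    (K : Set (Fin n → ℝ)) (hKsub : K ⊆ Set.Icc (-1 : Fin n → ℝ) 1)
    (hK0 : (0 : Fin n → ℝ) ∈ K)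
    (hKcov : K ⊆ ⋃ i : Fin n, (fun x => x + (π - Pi.single i 1)) '' K) :
    ∃ seq : ℕ → Fin n,
      (∀ k : ℕ,
        (fun i => (((Finset.range k).filter (fun j => seq j = i)).card : ℝ) - k * π i) ∈ K) ∧
      (∀ k : ℕ, 1 ≤ k → ∀ i : Fin n,
        |(((Finset.range k).filter (fun j => seq j = i)).card : ℝ) - k * π i| ≤ 1) := by
  have key : ∀ d ∈ K, ∃ i : Fin n, d + (Pi.single i 1 - π) ∈ K := by
    intro d hd
    have h := hKcov hd
    rw [Set.mem_iUnion] at h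
    obtain ⟨i, x, hx, hxe⟩ := h
    refine ⟨i, ?_⟩
    have hxd : x = d + (Pi.single i 1 - π) := by
      rw [← hxe]; funext j
      simp only [Pi.add_apply, Pi.sub_apply]; ring
    rwa [hxd] at hx
  choose f hf using key
  set D : ℕ → {p : Fin n → ℝ // p ∈ K} :=
    fun k => Nat.rec ⟨0, hK0⟩
      (fun _ p => ⟨p.1 + (Pi.single (f p.1 p.2) 1 - π), hf p.1 p.2⟩) k with hD
  have main : ∀ k : ℕ,
      (fun i => (((Finset.range k).filter
        (fun j => f (D j).1 (D j).2 = i)).card : ℝ) - k * π i) = (D k).1 := by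
    intro k
    induction k with
    | zero => funext i; simp [hD]
    | succ k ih =>
      funext i
      have hstep : (D (k+1)).1 = (D k).1 + ((Pi.single (f (D k).1 (D k).2) 1 : Fin n → ℝ) - π) := rfl
      have hfun := congrFun ih i
      rw [hstep]
      have hcard : ((Finset.range (k+1)).filter
          (fun j => f (D j).1 (D j).2 = i)).card
          = ((Finset.range k).filter (fun j => f (D j).1 (D j).2 = i)).card
            + (if f (D k).1 (D k).2 = i then 1 else 0) := by
        rw [Finset.range_add_one, Finset.filter_insert]
        split <;> simp [Finset.card_insert_of_notMem, Finset.mem_filter]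
      rw [hcard]
      have hsingle : (Pi.single (f (D k).1 (D k).2) 1 : Fin n → ℝ) i
          = if f (D k).1 (D k).2 = i then 1 else 0 := by
        rcases eq_or_ne (f (D k).1 (D k).2) i with h | h
        · rw [h, Pi.single_eq_same, if_pos rfl]
        · rw [Pi.single_eq_of_ne (Ne.symm h), if_neg h]
      simp only [Pi.add_apply, Pi.sub_apply]
      rw [← hfun, hsingle]
      push_cast
      split <;> ring
  refine ⟨fun k => f (D k).1 (D k).2, fun k => ?_, fun k hk i => ?_⟩
  · rw [main k]; exact (D k).2
  · have hmem := hKsub (by rw [main k]; exact (D k).2 :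
      (fun i => (((Finset.range k).filter
        (fun j => f (D j).1 (D j).2 = i)).card : ℝ) - k * π i) ∈ K)
    obtain ⟨h1, h2⟩ := hmem
    exact abs_le.2 ⟨h1 i, h2 i⟩
end

section
/- Given discrete probability distributions π₁, π₂, … on a countable set S, there exists an infinite sequence s₁, s₂, … in S such that for all integers 0 ≤ j ≤ k and all s ∈ S, the windowed discrepancy satisfies |(N_k(s) − N_j(s)) − ∑_{i=j+1}^{k} π_i(s)| < 2, where N_k(s) := #{i : 1 ≤ i ≤ k and s_i = s}. -/
open Finset
set_option linter.unusedSectionVars false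

section Stmt7Aux
variable {S : Type*} [DecidableEq S] [Nonempty S]

noncomputable def stmtPP (π : ℕ → S → ℝ) (k : ℕ) (s : S) : ℝ := ∑ i ∈ Finset.range k, π i s

noncomputable def stmtNN (f : ℕ → S) (k : ℕ) (s : S) : ℕ :=
  ((Finset.range k).filter (fun i => f i = s)).card

open Classical in
noncomputable def stmtDL (π : ℕ → S → ℝ) (s : S) (n : ℕ) : ℕ∞ :=
  if h : ∃ k : ℕ, (n : ℝ) < stmtPP π k s then ((Nat.find h : ℕ) : ℕ∞) else ⊤

def stmtAvail (π : ℕ → S → ℝ) (f : ℕ → S) (k : ℕ) : Set S :=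
  {s | (stmtNN f k s : ℝ) < stmtPP π (k+1) s}

open Classical in
noncomputable def stmtPick (π : ℕ → S → ℝ) (f : ℕ → S) (k : ℕ) : S :=
  if h : ∃ s ∈ stmtAvail π f k, ∀ s' ∈ stmtAvail π f k,
      stmtDL π s (stmtNN f k s + 1) ≤ stmtDL π s' (stmtNN f k s' + 1)
  then h.choose else Classical.arbitrary S

noncomputable def stmtPre (π : ℕ → S → ℝ) : ℕ → (ℕ → S)
  | 0 => fun _ => Classical.arbitrary S
  | (k+1) => fun i => if i = k then stmtPick π (stmtPre π k) k else stmtPre π k i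

noncomputable def stmtSeq (π : ℕ → S → ℝ) : ℕ → S := fun n => stmtPre π (n+1) n

variable (π : ℕ → S → ℝ)

lemma stmtPP_zero (s : S) : stmtPP π 0 s = 0 := by simp [stmtPP]

lemma stmtPP_succ (k : ℕ) (s : S) : stmtPP π (k+1) s = stmtPP π k s + π k s := by
  simp [stmtPP, Finset.sum_range_succ]

lemma stmtPP_mono (hπ0 : ∀ i s, 0 ≤ π i s) {j k : ℕ} (h : j ≤ k) (s : S) :
    stmtPP π j s ≤ stmtPP π k s := by
  apply Finset.sum_le_sum_of_subset_of_nonneg (Finset.range_subset_range.2 h)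
  intro i _ _; exact hπ0 i s

lemma stmtNN_zero (f : ℕ → S) (s : S) : stmtNN f 0 s = 0 := by simp [stmtNN]

lemma stmtNN_succ (f : ℕ → S) (k : ℕ) (s : S) :
    stmtNN f (k+1) s = stmtNN f k s + (if f k = s then 1 else 0) := by
  simp [stmtNN, Finset.range_add_one, Finset.filter_insert]
  split <;> simp [Finset.card_insert_of_notMem]

lemma stmtNN_mono (f : ℕ → S) {j k : ℕ} (h : j ≤ k) (s : S) : stmtNN f j s ≤ stmtNN f k s := by
  apply Finset.card_le_card
  exact Finset.filter_subset_filter _ (Finset.range_subset_range.2 h)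

lemma stmtNN_split (f : ℕ → S) {u D : ℕ} (h : u ≤ D) (s : S) :
    stmtNN f D s = stmtNN f u s + ((Finset.Ico u D).filter (fun i => f i = s)).card := by
  unfold stmtNN
  rw [Finset.range_eq_Ico, ← Finset.Ico_union_Ico_eq_Ico (Nat.zero_le u) h,
    Finset.filter_union, Finset.card_union_of_disjoint, ← Finset.range_eq_Ico]
  exact Finset.disjoint_filter_filter (Finset.Ico_disjoint_Ico_consecutive 0 u D)

lemma stmt_summable (hπ1 : ∀ i, ∑' s, π i s = 1) (i : ℕ) : Summable (fun s => π i s) := by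
  by_contra h
  have := tsum_eq_zero_of_not_summable h
  rw [hπ1 i] at this; norm_num at this

lemma stmt_summable_PP (hπ1 : ∀ i, ∑' s, π i s = 1) (k : ℕ) : Summable (stmtPP π k) := by
  unfold stmtPP
  exact summable_sum (fun i _ => stmt_summable π hπ1 i)

lemma stmt_tsum_PP (hπ1 : ∀ i, ∑' s, π i s = 1) (k : ℕ) : ∑' s, stmtPP π k s = k := by
  unfold stmtPP
  rw [Summable.tsum_finsetSum (fun i _ => stmt_summable π hπ1 i)]
  simp [hπ1]

lemma stmtNN_zero_of_notMem (f : ℕ → S) (k : ℕ) {s : S}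
    (h : s ∉ (Finset.range k).image f) : stmtNN f k s = 0 := by
  unfold stmtNN
  rw [Finset.card_eq_zero, Finset.filter_eq_empty_iff]
  intro i hi hfi
  exact h (Finset.mem_image.2 ⟨i, hi, hfi⟩)

lemma stmt_summable_NN (f : ℕ → S) (k : ℕ) : Summable (fun s => (stmtNN f k s : ℝ)) := by
  apply summable_of_ne_finset_zero (s := (Finset.range k).image f)
  intro s hs
  simp [stmtNN_zero_of_notMem f k hs]

lemma stmt_tsum_NN (f : ℕ → S) (k : ℕ) : ∑' s, (stmtNN f k s : ℝ) = k := by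
  rw [tsum_eq_sum (s := (Finset.range k).image f)
    (fun s hs => by simp [stmtNN_zero_of_notMem f k hs])]
  rw [← Nat.cast_sum]
  norm_cast
  unfold stmtNN
  have := Finset.card_eq_sum_card_image f (Finset.range k)
  rw [Finset.card_range] at this
  exact this.symm


-- deadline lemmas
lemma stmtDL_le (s : S) (n k : ℕ) (h : (n : ℝ) < stmtPP π k s) : stmtDL π s n ≤ (k : ℕ∞) := by
  classical
  rw [stmtDL, dif_pos ⟨k, h⟩]
  exact_mod_cast Nat.cast_le.2 (Nat.find_min' _ h)

lemma stmtDL_spec {s : S} {n D : ℕ} (h : stmtDL π s n ≤ (D : ℕ∞)) (hπ0 : ∀ i s, 0 ≤ π i s) :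
    (n : ℝ) < stmtPP π D s := by
  classical
  rw [stmtDL] at h
  split at h
  · rename_i hex
    have h1 : Nat.find hex ≤ D := by exact_mod_cast h
    exact lt_of_lt_of_le (Nat.find_spec hex) (stmtPP_mono π hπ0 h1 s)
  · exact absurd h (by simp)

lemma stmtDL_mono (s : S) {n m : ℕ} (h : n ≤ m) : stmtDL π s n ≤ stmtDL π s m := by
  classical
  by_cases hex : ∃ k : ℕ, (m : ℝ) < stmtPP π k s
  · have hk := Nat.find_spec hex
    have hn : (n : ℝ) < stmtPP π (Nat.find hex) s :=
      lt_of_le_of_lt (by exact_mod_cast h) hk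
    have h2 : stmtDL π s m = ((Nat.find hex : ℕ) : ℕ∞) := by
      simp only [stmtDL]; rw [dif_pos hex]
    rw [h2]
    exact stmtDL_le π s n (Nat.find hex) hn
  · have h2 : stmtDL π s m = ⊤ := by simp only [stmtDL]; rw [dif_neg hex]
    rw [h2]; exact le_top

lemma stmtAvail_nonempty (hπ0 : ∀ i s, 0 ≤ π i s) (hπ1 : ∀ i, ∑' s, π i s = 1)
    (f : ℕ → S) (k : ℕ) : (stmtAvail π f k).Nonempty := by
  by_contra h
  rw [Set.not_nonempty_iff_eq_empty] at h
  have hall : ∀ s, stmtPP π (k+1) s ≤ (stmtNN f k s : ℝ) := by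
    intro s
    by_contra hs
    have hmem : s ∈ stmtAvail π f k := lt_of_not_ge hs
    rw [h] at hmem
    exact hmem
  have := Summable.tsum_le_tsum hall (stmt_summable_PP π hπ1 (k+1)) (stmt_summable_NN f k)
  rw [stmt_tsum_PP π hπ1 (k+1), stmt_tsum_NN f k] at this
  exact absurd this (by push_cast; linarith)

lemma stmtPick_spec (hπ0 : ∀ i s, 0 ≤ π i s) (hπ1 : ∀ i, ∑' s, π i s = 1)
    (f : ℕ → S) (k : ℕ) :
    stmtPick π f k ∈ stmtAvail π f k ∧ ∀ s' ∈ stmtAvail π f k,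
      stmtDL π (stmtPick π f k) (stmtNN f k (stmtPick π f k) + 1) ≤ stmtDL π s' (stmtNN f k s' + 1) := by
  classical
  have hne := stmtAvail_nonempty π hπ0 hπ1 f k
  have hex : ∃ s ∈ stmtAvail π f k, ∀ s' ∈ stmtAvail π f k,
      stmtDL π s (stmtNN f k s + 1) ≤ stmtDL π s' (stmtNN f k s' + 1) := by
    have hwf : WellFounded ((· < ·) : ℕ∞ → ℕ∞ → Prop) := wellFounded_lt
    set T : Set ℕ∞ := (fun s => stmtDL π s (stmtNN f k s + 1)) '' stmtAvail π f k with hT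
    have hTne : T.Nonempty := hne.image _
    obtain ⟨m, hmT, hmin⟩ := hwf.has_min T hTne
    obtain ⟨s, hs, hsm⟩ := hmT
    refine ⟨s, hs, fun s' hs' => ?_⟩
    have hsm' : stmtDL π s (stmtNN f k s + 1) = m := hsm
    rw [hsm']
    exact le_of_not_gt (hmin _ ⟨s', hs', rfl⟩)
  rw [stmtPick, dif_pos hex]
  exact ⟨hex.choose_spec.1, hex.choose_spec.2⟩

-- agreement of prefixes with the sequence
lemma stmtPre_agree : ∀ m i, i < m → stmtPre π m i = stmtSeq π i := by
  intro m
  induction m with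
  | zero => intro i hi; omega
  | succ k ih =>
    intro i hi
    by_cases hik : i = k
    · subst hik
      rfl
    · have : stmtPre π (k+1) i = stmtPre π k i := by simp [stmtPre, hik]
      rw [this, ih i (by omega)]

lemma stmtNN_pre_eq (k : ℕ) (s : S) : stmtNN (stmtPre π k) k s = stmtNN (stmtSeq π) k s := by
  unfold stmtNN
  congr 1
  apply Finset.filter_congr
  intro i hi
  rw [stmtPre_agree π k i (Finset.mem_range.1 hi)]

lemma stmtSeq_def (k : ℕ) : stmtSeq π k = stmtPick π (stmtPre π k) k := by
  show stmtPre π (k+1) k = _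
  simp [stmtPre]

lemma stmtSeq_spec (hπ0 : ∀ i s, 0 ≤ π i s) (hπ1 : ∀ i, ∑' s, π i s = 1) (k : ℕ) :
    ((stmtNN (stmtSeq π) k (stmtSeq π k) : ℝ) < stmtPP π (k+1) (stmtSeq π k)) ∧
    ∀ s' : S, (stmtNN (stmtSeq π) k s' : ℝ) < stmtPP π (k+1) s' →
      stmtDL π (stmtSeq π k) (stmtNN (stmtSeq π) k (stmtSeq π k) + 1) ≤
        stmtDL π s' (stmtNN (stmtSeq π) k s' + 1) := by
  have h := stmtPick_spec π hπ0 hπ1 (stmtPre π k) k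
  rw [← stmtSeq_def] at h
  constructor
  · have := h.1
    rw [stmtAvail, Set.mem_setOf, stmtNN_pre_eq] at this
    exact this
  · intro s' hs'
    have := h.2 s' (by rw [stmtAvail, Set.mem_setOf, stmtNN_pre_eq]; exact hs')
    rwa [stmtNN_pre_eq, stmtNN_pre_eq] at this

-- upper invariant
lemma stmt_upper (hπ0 : ∀ i s, 0 ≤ π i s) (hπ1 : ∀ i, ∑' s, π i s = 1) :
    ∀ k s, (stmtNN (stmtSeq π) k s : ℝ) < stmtPP π k s + 1 := by
  intro k
  induction k with
  | zero => intro s; simp [stmtNN_zero, stmtPP_zero]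
  | succ k ih =>
    intro s
    rw [stmtNN_succ]
    by_cases hks : stmtSeq π k = s
    · subst hks
      have := (stmtSeq_spec π hπ0 hπ1 k).1
      simp only [if_pos rfl]
      push_cast
      linarith
    · simp only [if_neg hks, add_zero]
      have := ih s
      have h2 : stmtPP π k s ≤ stmtPP π (k+1) s := stmtPP_mono π hπ0 (by omega) s
      linarith


lemma stmt_lower (hπ0 : ∀ i s, 0 ≤ π i s) (hπ1 : ∀ i, ∑' s, π i s = 1) :
    ∀ k s, stmtPP π k s ≤ (stmtNN (stmtSeq π) k s : ℝ) + 1 := by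
  classical
  by_contra hmiss
  push_neg at hmiss
  obtain ⟨k₀, s₀, hk₀⟩ := hmiss
  set sq := stmtSeq π with hsq
  set n₀ : ℕ := stmtNN sq k₀ s₀ + 1 with hn₀
  have h₀ : (n₀ : ℝ) < stmtPP π k₀ s₀ := by push_cast [hn₀]; linarith
  have hex : ∃ k : ℕ, (n₀ : ℝ) < stmtPP π k s₀ := ⟨k₀, h₀⟩
  set D : ℕ := Nat.find hex with hD
  have hdl₀ : stmtDL π s₀ n₀ ≤ (D : ℕ∞) := by
    have : stmtDL π s₀ n₀ = ((D : ℕ) : ℕ∞) := by simp only [stmtDL]; rw [dif_pos hex]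
    exact le_of_eq this
  have hDspec : (n₀ : ℝ) < stmtPP π D s₀ := Nat.find_spec hex
  have hDk₀ : D ≤ k₀ := Nat.find_min' hex h₀
  have hND : stmtNN sq D s₀ < n₀ := by
    have := stmtNN_mono sq hDk₀ s₀
    omega
  -- split point u
  have hu : ∃ u : ℕ, u ≤ D ∧
      (∀ i, u ≤ i → i < D → stmtDL π (sq i) (stmtNN sq i (sq i) + 1) ≤ (D : ℕ∞)) ∧
      (∀ t, u = t + 1 → ¬ (stmtDL π (sq t) (stmtNN sq t (sq t) + 1) ≤ (D : ℕ∞))) := by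
    by_cases hB : ((Finset.range D).filter
        (fun i => ¬ (stmtDL π (sq i) (stmtNN sq i (sq i) + 1) ≤ (D : ℕ∞)))).Nonempty
    · set Bs := (Finset.range D).filter
        (fun i => ¬ (stmtDL π (sq i) (stmtNN sq i (sq i) + 1) ≤ (D : ℕ∞)))
      have hmm := Finset.mem_filter.1 (Bs.max'_mem hB)
      refine ⟨Bs.max' hB + 1, ?_, ?_, ?_⟩
      · have := Finset.mem_range.1 hmm.1
        omega
      · intro i hi hiD
        by_contra hbad
        have hiB : i ∈ Bs := Finset.mem_filter.2 ⟨Finset.mem_range.2 hiD, hbad⟩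
        have := Bs.le_max' i hiB
        omega
      · intro t ht
        have htm : Bs.max' hB = t := by omega
        rw [← htm]
        exact hmm.2
    · refine ⟨0, Nat.zero_le D, ?_, by omega⟩
      intro i _ hiD
      by_contra hbad
      exact hB ⟨i, Finset.mem_filter.2 ⟨Finset.mem_range.2 hiD, hbad⟩⟩
  obtain ⟨u, huD, hgood, hbad⟩ := hu
  -- key claim: tasks with deadline ≤ D pending at u-1 are released after u-1
  have hK : ∀ (s : S) (n : ℕ), 1 ≤ n → (∀ t, u = t + 1 → stmtNN sq t s < n) →
      stmtDL π s n ≤ (D : ℕ∞) → stmtPP π u s ≤ (n : ℝ) - 1 := by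
    intro s n h1 h2 h3
    match hu' : u with
    | 0 =>
      rw [stmtPP_zero]
      have : (1 : ℝ) ≤ (n : ℝ) := by exact_mod_cast h1
      linarith
    | (t+1) =>
      by_contra hc
      push_neg at hc
      have hNts : stmtNN sq t s < n := h2 t rfl
      have hav : (stmtNN sq t s : ℝ) < stmtPP π (t+1) s := by
        have hle : (stmtNN sq t s : ℝ) + 1 ≤ (n : ℝ) := by exact_mod_cast hNts
        linarith
      have hmin := (stmtSeq_spec π hπ0 hπ1 t).2 s hav
      have hmono : stmtDL π s (stmtNN sq t s + 1) ≤ stmtDL π s n :=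
        stmtDL_mono π s (by omega)
      exact (hbad t rfl) (le_trans (le_trans hmin hmono) h3)
  -- occurrence sets in the window [u, D)
  have hsplit : ∀ s : S, stmtNN sq D s
      = stmtNN sq u s + ((Finset.Ico u D).filter (fun i => sq i = s)).card :=
    fun s => stmtNN_split sq huD s
  -- first/last occurrence facts
  have hfirst : ∀ s : S, ((Finset.Ico u D).filter (fun i => sq i = s)).Nonempty →
      stmtPP π u s ≤ (stmtNN sq u s : ℝ) ∧ (stmtNN sq D s : ℝ) < stmtPP π D s := by
    intro s hocc
    set Occ := (Finset.Ico u D).filter (fun i => sq i = s) with hOcc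
    have hi₁m := Finset.mem_filter.1 (Occ.min'_mem hocc)
    rw [Finset.mem_Ico] at hi₁m
    obtain ⟨⟨hui₁, hi₁D⟩, hsqi₁⟩ := hi₁m
    set i₁ := Occ.min' hocc with hi₁
    have hNi₁ : stmtNN sq i₁ s = stmtNN sq u s := by
      have hsp := stmtNN_split sq hui₁ s
      have hempty : ((Finset.Ico u i₁).filter (fun i => sq i = s)) = ∅ := by
        rw [Finset.filter_eq_empty_iff]
        intro j hj hsqj
        rw [Finset.mem_Ico] at hj
        have hjO : j ∈ Occ := Finset.mem_filter.2
          ⟨Finset.mem_Ico.2 ⟨hj.1, lt_of_lt_of_le hj.2 (le_of_lt hi₁D)⟩, hsqj⟩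
        have := Occ.min'_le j hjO
        omega
      rw [hempty] at hsp
      simpa using hsp
    have hgl₁ := hgood i₁ hui₁ hi₁D
    rw [hsqi₁, hNi₁] at hgl₁
    have hPu : stmtPP π u s ≤ (stmtNN sq u s : ℝ) := by
      have := hK s (stmtNN sq u s + 1) (by omega) (fun t ht => by
        have : stmtNN sq t s ≤ stmtNN sq u s := stmtNN_mono sq (by omega) s
        omega) hgl₁
      push_cast at this ⊢
      linarith
    have hj₁m := Finset.mem_filter.1 (Occ.max'_mem hocc)
    rw [Finset.mem_Ico] at hj₁m
    obtain ⟨⟨huj₁, hj₁D⟩, hsqj₁⟩ := hj₁m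
    set j₁ := Occ.max' hocc with hj₁
    have hNj₁ : stmtNN sq D s = stmtNN sq j₁ s + 1 := by
      have hsp := stmtNN_split sq (le_of_lt hj₁D) s
      have hone : ((Finset.Ico j₁ D).filter (fun i => sq i = s)) = {j₁} := by
        apply Finset.eq_singleton_iff_unique_mem.2
        constructor
        · exact Finset.mem_filter.2 ⟨Finset.mem_Ico.2 ⟨le_refl j₁, hj₁D⟩, hsqj₁⟩
        · intro j hj
          have hj' := Finset.mem_filter.1 hj
          rw [Finset.mem_Ico] at hj'
          have hjO : j ∈ Occ := Finset.mem_filter.2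
            ⟨Finset.mem_Ico.2 ⟨le_trans huj₁ hj'.1.1, hj'.1.2⟩, hj'.2⟩
          have := Occ.le_max' j hjO
          omega
      rw [hone] at hsp
      simpa using hsp
    have hgl₂ := hgood j₁ huj₁ hj₁D
    rw [hsqj₁] at hgl₂
    have hPD : (stmtNN sq D s : ℝ) < stmtPP π D s := by
      have := stmtDL_spec π hgl₂ hπ0
      rw [hNj₁]
      push_cast at this ⊢
      linarith
    exact ⟨hPu, hPD⟩
  -- the deficiency function
  set δ : S → ℝ := fun s =>
    (stmtPP π D s - stmtPP π u s) - ((stmtNN sq D s : ℝ) - (stmtNN sq u s : ℝ)) with hδ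
  have hcap : ∀ s, 0 ≤ δ s := by
    intro s
    by_cases hocc : ((Finset.Ico u D).filter (fun i => sq i = s)).Nonempty
    · obtain ⟨hPu, hPD⟩ := hfirst s hocc
      simp only [hδ]
      linarith
    · rw [Finset.not_nonempty_iff_eq_empty] at hocc
      have : stmtNN sq D s = stmtNN sq u s := by
        have := hsplit s
        rw [hocc] at this
        simpa using this
      simp only [hδ, this]
      have := stmtPP_mono π hπ0 huD s
      linarith
  have hδ₀ : 0 < δ s₀ := by
    by_cases hocc : ((Finset.Ico u D).filter (fun i => sq i = s₀)).Nonempty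
    · obtain ⟨hPu, hPD⟩ := hfirst s₀ hocc
      have h1 : (stmtNN sq D s₀ : ℝ) + 1 ≤ (n₀ : ℝ) := by exact_mod_cast hND
      simp only [hδ]
      linarith
    · rw [Finset.not_nonempty_iff_eq_empty] at hocc
      have hDu : stmtNN sq D s₀ = stmtNN sq u s₀ := by
        have := hsplit s₀
        rw [hocc] at this
        simpa using this
      have hPu : stmtPP π u s₀ ≤ (n₀ : ℝ) - 1 := by
        apply hK s₀ n₀ (by omega) (fun t ht => by
          have : stmtNN sq t s₀ ≤ stmtNN sq D s₀ := stmtNN_mono sq (by omega) s₀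
          omega) hdl₀
      simp only [hδ, hDu]
      linarith
  -- summability and total
  have hsNu := stmt_summable_NN sq u
  have hsND := stmt_summable_NN sq D
  have hsPu := stmt_summable_PP π hπ1 u
  have hsPD := stmt_summable_PP π hπ1 D
  have hsδ : Summable δ := ((hsPD.sub hsPu).sub (hsND.sub hsNu))
  have htsum : ∑' s, δ s = 0 := by
    simp only [hδ]
    rw [Summable.tsum_sub (hsPD.sub hsPu) (hsND.sub hsNu), Summable.tsum_sub hsPD hsPu, Summable.tsum_sub hsND hsNu,
      stmt_tsum_PP π hπ1 D, stmt_tsum_PP π hπ1 u, stmt_tsum_NN sq D, stmt_tsum_NN sq u]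
    ring
  have hle : δ s₀ ≤ ∑' s, δ s := Summable.le_tsum hsδ s₀ (fun j _ => hcap j)
  rw [htsum] at hle
  linarith

end Stmt7Aux


/-- Windowed discrepancy: given probability distributions `π₁, π₂, …` on a countable
set `S`, there is a sequence `s₁, s₂, …` in `S` (here `seq k` is `s_{k+1}`) such that
for all `0 ≤ j ≤ k` and all `s ∈ S`,
`|(N_k(s) - N_j(s)) - ∑_{i=j+1}^{k} π_i(s)| < 2`. With 0-based indexing the window sum
`∑_{i=j+1}^{k} π_i(s)` is `∑ i ∈ Finset.Ico j k, π i s`. -/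
theorem stmt_7 {S : Type*} [Countable S] [DecidableEq S] [Nonempty S]
    (π : ℕ → S → ℝ) (hπ0 : ∀ i s, 0 ≤ π i s) (hπ1 : ∀ i, ∑' s, π i s = 1) :
    ∃ seq : ℕ → S, ∀ j k : ℕ, j ≤ k → ∀ s : S,
      |((((Finset.range k).filter (fun i => seq i = s)).card : ℝ)
          - (((Finset.range j).filter (fun i => seq i = s)).card : ℝ))
        - ∑ i ∈ Finset.Ico j k, π i s| < 2 := by
  refine ⟨stmtSeq π, fun j k hjk s => ?_⟩
  have hsum : ∑ i ∈ Finset.Ico j k, π i s = stmtPP π k s - stmtPP π j s := by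
    rw [stmtPP, stmtPP, Finset.sum_Ico_eq_sub _ hjk]
  have hAk := stmt_upper π hπ0 hπ1 k s
  have hAj := stmt_upper π hπ0 hπ1 j s
  have hBk := stmt_lower π hπ0 hπ1 k s
  have hBj := stmt_lower π hπ0 hπ1 j s
  have hNk : (((Finset.range k).filter (fun i => stmtSeq π i = s)).card : ℝ)
      = (stmtNN (stmtSeq π) k s : ℝ) := rfl
  have hNj : (((Finset.range j).filter (fun i => stmtSeq π i = s)).card : ℝ)
      = (stmtNN (stmtSeq π) j s : ℝ) := rfl
  rw [hsum, hNk, hNj, abs_lt]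
  constructor <;> linarith
end

section
/- Let S be a finite set and let π be a rational probability distribution on S; write π(s) = a_s/m where m is a positive integer and each a_s is a nonnegative integer with ∑_s a_s = m. Then there exists a sequence s₁, s₂, … in S that is periodic with period m (s_{k+m} = s_k for all k ≥ 1) and satisfies, for all k ≥ 1 and all s ∈ S, |N_k(s) − k·π(s)| < 1, where N_k(s) := #{i : 1 ≤ i ≤ k and s_i = s}. Moreover N_m(s) = m·π(s) = a_s for every s ∈ S. -/
/-!
Cut `[0, 1)` into `m` equal slots and, for each `s`, into `a_s` equal pieces. Suppose the pieces
of all symbols are matched bijectively with the slots so that every piece overlaps its slot, and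
let the `t`-th term of the sequence be the symbol whose piece sits in slot `t`. Among the first
`k` slots, the pieces of `s` then include all those ending by `k/m` and only pieces starting
before `k/m`, which keeps their number strictly within `1` of `k a_s / m`. Hall's theorem provides
the matching: refining both partitions into atoms of length `1/(m a_s)` shows that any set of
pieces of `s` overlaps slots of total length at least its own. Repeating the first `m` terms
periodically preserves the bounds, since each period contains `s` exactly `a_s` times.
-/

open Finset

/-- The pieces `[j/a, (j+1)/a)` and `[t/m, (t+1)/m)` of `[0, 1)` overlap (scaled by `a m`). -/
def PartsOverlap (a m j t : ℕ) : Prop := m * j < (t + 1) * a ∧ a * t < m * (j + 1)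

instance (a m j t : ℕ) : Decidable (PartsOverlap a m j t) := inferInstanceAs (Decidable (_ ∧ _))

theorem mul_card_le_mul_card_of_partsOverlap {a m : ℕ} {A T : Finset ℕ}
    (hA : ∀ j ∈ A, j < a) (hT : ∀ j ∈ A, ∀ t < m, PartsOverlap a m j t → t ∈ T) :
    m * #A ≤ a * #T := by
  -- The atom `(j, r)`, `r < m`, of the piece `j` is the atom `(t, q)`, `q < a`, of the slot `t`,
  -- where `j m + r = t a + q`.
  calc m * #A = #(A ×ˢ range m) := by rw [card_product, card_range, mul_comm]
    _ ≤ #(T ×ˢ range a) := by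
      refine card_le_card_of_injOn (fun p => ((p.1 * m + p.2) / a, (p.1 * m + p.2) % a)) ?_ ?_
      · rintro ⟨j, r⟩ hjr
        simp only [coe_product, coe_range, Set.mem_prod, mem_coe, Set.mem_Iio] at hjr ⊢
        obtain ⟨hj, hr⟩ := hjr
        have ha : 0 < a := (Nat.zero_le j).trans_lt (hA j hj)
        have hjm : (j + 1) * m ≤ a * m := Nat.mul_le_mul_right m (hA j hj)
        set t := (j * m + r) / a
        have ht₁ : t * a ≤ j * m + r := Nat.div_mul_le_self _ _
        have ht₂ : j * m + r < t * a + a := Nat.lt_div_mul_add ha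
        have htm : t < m := Nat.lt_of_mul_lt_mul_right (a := a) (by nlinarith)
        exact ⟨hT j hj t htm ⟨by nlinarith, by nlinarith⟩, Nat.mod_lt _ ha⟩
      · rintro ⟨j, r⟩ hjr ⟨j', r'⟩ hjr' h
        simp only [coe_product, coe_range, Set.mem_prod, mem_coe, Set.mem_Iio, Prod.mk.injEq]
          at hjr hjr' h
        have h' : j * m + r = j' * m + r' := by
          rw [← Nat.div_add_mod (j * m + r) a, ← Nat.div_add_mod (j' * m + r') a, h.1, h.2]
        have hm : 0 < m := (Nat.zero_le r).trans_lt hjr.2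
        obtain ⟨hq, hr⟩ :=
          (Nat.div_mod_unique (a := j * m + r) (d := j) hm).2 ⟨by ring, hjr.2⟩
        obtain ⟨hq', hr'⟩ :=
          (Nat.div_mod_unique (a := j' * m + r') (d := j') hm).2 ⟨by ring, hjr'.2⟩
        rw [h'] at hq hr
        simp only [Prod.mk.injEq]
        exact ⟨hq.symm.trans hq', hr.symm.trans hr'⟩
    _ = a * #T := by rw [card_product, card_range, mul_comm]

theorem mul_card_filter_lt_lt {a m k : ℕ} (hm : 0 < m) (t : Fin a → ℕ)
    (ht : ∀ j : Fin a, PartsOverlap a m j (t j)) : m * #{j | t j < k} < k * a + m := by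
  have hcard : #{j | t j < k} ≤ (k * a + m - 1) / m :=
    calc #{j | t j < k} = #((univ.filter fun j => t j < k).map Fin.valEmbedding) :=
          (card_map _).symm
      _ ≤ #(range ((k * a + m - 1) / m)) := by
          refine card_le_card fun i hi => ?_
          obtain ⟨j, hj, rfl⟩ := mem_map.1 hi
          have hjk : t j + 1 ≤ k := (mem_filter.1 hj).2
          have : m * j < k * a := (ht j).1.trans_le (Nat.mul_le_mul_right a hjk)
          rw [mem_range, Fin.valEmbedding_apply, Nat.lt_iff_add_one_le, Nat.le_div_iff_mul_le hm,
            add_one_mul, mul_comm]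
          omega
      _ = (k * a + m - 1) / m := card_range _
  calc m * #{j | t j < k} ≤ m * ((k * a + m - 1) / m) := Nat.mul_le_mul_left m hcard
    _ ≤ k * a + m - 1 := Nat.mul_div_le _ _
    _ < k * a + m := by omega

theorem lt_mul_card_filter_lt {a m k : ℕ} (hm : 0 < m) (hk : k ≤ m) (t : Fin a → ℕ)
    (ht : ∀ j : Fin a, PartsOverlap a m j (t j)) : k * a < m * #{j | t j < k} + m := by
  have hle : k * a / m ≤ a := Nat.div_le_of_le_mul (Nat.mul_le_mul_right a hk)
  have hcard : k * a / m ≤ #{j | t j < k} :=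
    calc k * a / m = #(univ.map (Fin.castLEEmb hle)) := by simp
      _ ≤ #{j | t j < k} := by
          refine card_le_card fun j hj => ?_
          obtain ⟨i, -, rfl⟩ := mem_map.1 hj
          have hi : (i + 1) * m ≤ k * a := (Nat.le_div_iff_mul_le hm).1 i.isLt
          have : a * t (Fin.castLEEmb hle i) < a * k := by
            have := (ht (Fin.castLEEmb hle i)).2
            simp only [Fin.castLEEmb_apply, Fin.val_castLE] at this ⊢
            nlinarith
          exact mem_filter.2 ⟨mem_univ _, Nat.lt_of_mul_lt_mul_left this⟩
  calc k * a < m * (k * a / m + 1) := Nat.lt_mul_div_succ _ hm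
    _ ≤ m * #{j | t j < k} + m := by
      rw [mul_add_one]
      exact Nat.add_le_add_right (Nat.mul_le_mul_left m hcard) m

section Copies

variable {S : Type*} [Fintype S] (a : S → ℕ) {m : ℕ}

theorem card_le_card_partsOverlap (hm : 0 < m) (ha : ∑ s, a s = m)
    (X : Finset (Σ s, Fin (a s))) :
    #X ≤ #{t : Fin m | ∃ x ∈ X, PartsOverlap (a x.1) m x.2 t} := by
  classical
  set T : Finset (Fin m) := {t | ∃ x ∈ X, PartsOverlap (a x.1) m x.2 t}
  have hfiber : ∀ s, m * #{x ∈ X | x.1 = s} ≤ a s * #T := by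
    intro s
    calc m * #{x ∈ X | x.1 = s} = m * #({x ∈ X | x.1 = s}.image fun x => (x.2 : ℕ)) := by
          rw [card_image_of_injOn]
          rintro ⟨s₁, j₁⟩ h₁ ⟨s₂, j₂⟩ h₂ h
          simp only [coe_filter, Set.mem_ofPred_eq] at h₁ h₂
          obtain ⟨-, rfl⟩ := h₁
          obtain ⟨-, rfl⟩ := h₂
          exact congrArg _ (Fin.ext h)
      _ ≤ a s * #(T.image Fin.val) := by
          apply mul_card_le_mul_card_of_partsOverlap
          · simp only [mem_image, mem_filter]
            rintro _ ⟨⟨s', j⟩, ⟨-, rfl⟩, rfl⟩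
            exact j.isLt
          · simp only [mem_image, mem_filter]
            rintro _ ⟨⟨s', j⟩, ⟨hX, rfl⟩, rfl⟩ t ht hjt
            exact ⟨⟨t, ht⟩, mem_filter.2 ⟨mem_univ _, _, hX, hjt⟩, rfl⟩
      _ = a s * #T := by rw [card_image_of_injective _ Fin.val_injective]
  have hX : m * #X ≤ m * #T :=
    calc m * #X = ∑ s, m * #{x ∈ X | x.1 = s} := by
          rw [card_eq_sum_card_fiberwise (f := Sigma.fst) (t := univ)
            fun _ _ => mem_coe.2 (mem_univ _), mul_sum]
      _ ≤ ∑ s, a s * #T := sum_le_sum fun s _ => hfiber s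
      _ = m * #T := by rw [← sum_mul, ha]
  exact Nat.le_of_mul_le_mul_left hX hm

theorem exists_equiv_partsOverlap (hm : 0 < m) (ha : ∑ s, a s = m) :
    ∃ e : (Σ s, Fin (a s)) ≃ Fin m, ∀ x, PartsOverlap (a x.1) m x.2 (e x) := by
  obtain ⟨f, hf, hfX⟩ := (Fintype.all_card_le_filter_rel_iff_exists_injective _).1
    (card_le_card_partsOverlap a hm ha)
  have hcard : Fintype.card (Σ s, Fin (a s)) = Fintype.card (Fin m) := by simp [ha]
  exact ⟨.ofBijective f ((Fintype.bijective_iff_injective_and_card f).2 ⟨hf, hcard⟩), hfX⟩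

end Copies

theorem count_symm_fst_eq {S : Type*} [DecidableEq S] {a : S → ℕ} {m : ℕ} [NeZero m]
    (e : (Σ s, Fin (a s)) ≃ Fin m) {k : ℕ} (hk : k ≤ m) (s : S) :
    Nat.count (fun i : ℕ => (e.symm (Fin.ofNat m i)).1 = s) k =
      #{j : Fin (a s) | (e ⟨s, j⟩ : ℕ) < k} := by
  rw [Nat.count_eq_card_filter_range, ← card_map
    ((Function.Embedding.sigmaMk s).trans (e.toEmbedding.trans Fin.valEmbedding))]
  congr 1
  ext i
  simp only [mem_filter, mem_range, mem_map, mem_univ, true_and, Function.Embedding.trans_apply,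
    Function.Embedding.sigmaMk_apply, Equiv.coe_toEmbedding, Fin.valEmbedding_apply]
  constructor
  · rintro ⟨hi, hs⟩
    obtain ⟨⟨s', j⟩, hx⟩ : ∃ x, e.symm (Fin.ofNat m i) = x := ⟨_, rfl⟩
    rw [hx] at hs
    subst hs
    have hi' : (Fin.ofNat m i : ℕ) = i := Nat.mod_eq_of_lt (hi.trans_le hk)
    refine ⟨j, ?_, ?_⟩ <;> rw [← hx, Equiv.apply_symm_apply, hi']
    exact hi
  · rintro ⟨j, hj, rfl⟩
    exact ⟨hj, by simp⟩

theorem count_add_period {α : Type*} {f : ℕ → α} {m : ℕ} (hf : Function.Periodic f m)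
    (p : α → Prop) [DecidablePred p] (k : ℕ) :
    Nat.count (fun i => p (f i)) (m + k) =
      Nat.count (fun i => p (f i)) m + Nat.count (fun i => p (f i)) k := by
  rw [Nat.count_add]
  simp only [add_comm m, hf _]

theorem eq_of_mul_lt_mul_add_self {m c a : ℕ} (h₁ : m * c < m * a + m)
    (h₂ : m * a < m * c + m) : c = a := by
  rw [← mul_add_one] at h₁ h₂
  have := Nat.lt_of_mul_lt_mul_left h₁
  have := Nat.lt_of_mul_lt_mul_left h₂
  omega

theorem count_bounds_of_periodic {α : Type*} {f : ℕ → α} {m a : ℕ} (hm : 0 < m)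
    (hf : Function.Periodic f m) (p : α → Prop) [DecidablePred p]
    (h : ∀ k ≤ m, m * Nat.count (fun i => p (f i)) k < k * a + m ∧
      k * a < m * Nat.count (fun i => p (f i)) k + m) (k : ℕ) :
    m * Nat.count (fun i => p (f i)) k < k * a + m ∧
      k * a < m * Nat.count (fun i => p (f i)) k + m := by
  induction k using Nat.strong_induction_on with
  | _ k ih =>
    rcases le_or_gt k m with hk | hk
    · exact h k hk
    obtain ⟨k, rfl⟩ := Nat.exists_eq_add_of_le hk.le
    have hperiod : Nat.count (fun i => p (f i)) m = a :=
      eq_of_mul_lt_mul_add_self (h m le_rfl).1 (h m le_rfl).2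
    obtain ⟨h₁, h₂⟩ := ih k (by omega)
    rw [count_add_period hf, hperiod]
    constructor <;> nlinarith

theorem abs_natCast_sub_mul_div_lt_one {N k a m : ℕ} (hm : 0 < m) (h₁ : m * N < k * a + m)
    (h₂ : k * a < m * N + m) : |(N : ℝ) - k * (a / m)| < 1 := by
  have hm' : (0 : ℝ) < m := Nat.cast_pos.2 hm
  have h₁' : (m : ℝ) * N < k * a + m := by exact_mod_cast h₁
  have h₂' : (k : ℝ) * a < m * N + m := by exact_mod_cast h₂
  have hdiv : (N : ℝ) - k * (a / m) = (m * N - k * a) / m := by field_simp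
  rw [hdiv, abs_div, abs_of_pos hm', div_lt_one hm', abs_sub_lt_iff]
  constructor <;> linarith

/-- Here `seq k` is `s_{k+1}`. -/
theorem stmt_8_general {S : Type*} [Fintype S] [DecidableEq S]
    (m : ℕ) (hm : 0 < m) (a : S → ℕ) (ha : ∑ s, a s = m)
    (π : S → ℝ) (hπ : ∀ s, π s = (a s : ℝ) / m) :
    ∃ seq : ℕ → S,
      (∀ k : ℕ, seq (k + m) = seq k) ∧
      (∀ k : ℕ, 1 ≤ k → ∀ s : S,
        |(((Finset.range k).filter (fun i => seq i = s)).card : ℝ) - k * π s| < 1) ∧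
      (∀ s : S, ((Finset.range m).filter (fun i => seq i = s)).card = a s) ∧
      (∀ s : S, (m : ℝ) * π s = (a s : ℝ)) := by
  have : NeZero m := ⟨hm.ne'⟩
  obtain ⟨e, he⟩ := exists_equiv_partsOverlap a hm ha
  set seq : ℕ → S := fun i => (e.symm (Fin.ofNat m i)).1
  have hper : Function.Periodic seq m := fun i => by simp [seq, Fin.ofNat]
  have hbounds : ∀ s k, m * Nat.count (fun i => seq i = s) k < k * a s + m ∧
      k * a s < m * Nat.count (fun i => seq i = s) k + m := fun s =>
    count_bounds_of_periodic hm hper (· = s) fun k hk => by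
      rw [count_symm_fst_eq e hk]
      exact ⟨mul_card_filter_lt_lt hm _ fun j => he ⟨s, j⟩,
        lt_mul_card_filter_lt hm hk _ fun j => he ⟨s, j⟩⟩
  refine ⟨seq, hper, fun k _ s => ?_, fun s => ?_, fun s => ?_⟩
  · rw [← Nat.count_eq_card_filter_range, hπ]
    exact abs_natCast_sub_mul_div_lt_one hm (hbounds s k).1 (hbounds s k).2
  · rw [← Nat.count_eq_card_filter_range]
    exact eq_of_mul_lt_mul_add_self (hbounds s m).1 (hbounds s m).2
  · rw [hπ]
    field_simp

/-- Rational case with periodicity: if `π(s) = a_s / m` with `a_s ∈ ℕ`, `∑_s a_s = m`,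
`m ≥ 1`, then there is a sequence `s₁, s₂, …` in `S` (here `seq k` is `s_{k+1}`) that
is periodic with period `m` and satisfies `|N_k(s) - k·π(s)| < 1` for all `k ≥ 1` and
`s ∈ S`; moreover `N_m(s) = m·π(s) = a_s` for every `s`. -/
theorem stmt_8 {S : Type*} [Fintype S] [DecidableEq S] [Nonempty S]
    (m : ℕ) (hm : 0 < m) (a : S → ℕ) (ha : ∑ s, a s = m)
    (π : S → ℝ) (hπ : ∀ s, π s = (a s : ℝ) / m) :
    ∃ seq : ℕ → S,
      (∀ k : ℕ, seq (k + m) = seq k) ∧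
      (∀ k : ℕ, 1 ≤ k → ∀ s : S,
        |(((Finset.range k).filter (fun i => seq i = s)).card : ℝ) - k * π s| < 1) ∧
      (∀ s : S, ((Finset.range m).filter (fun i => seq i = s)).card = a s) ∧
      (∀ s : S, (m : ℝ) * π s = (a s : ℝ)) :=
  stmt_8_general m hm a ha π hπ
end

section
/- For any sequence of nonnegative real numbers π(1), π(2), … summing to 1, there exists a partition of the positive integers into pairwise disjoint sets F₁, F₂, … (with ⋃_i F_i = ℕ₊) such that for every i ≥ 1 and every k ≥ 1, the quantity |F_i ∩ {1,…,k}| − π(i)·k lies in the interval [−1, 1]; consequently each F_i has natural density π(i). -/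
/-!
Assign `n = 1, 2, …` earliest deadline first: among the indices `j` whose count does not exceed
`π j * n`, serve one whose next unit is due soonest. Serving only indices under quota gives
`count ≤ π j * k + 1`. If index `i` fell below `π i * k - 1`, let `a` be the last time up to `k`
at which a unit due after `k` was served. On `(a, k]` only units due by `k` are served, and the
choice made at time `a` forces every index served on `(a, k]`, and `i` itself, to be at or above
quota at time `a`. So on `(a, k]` each index gains at most `π j * (k - a)` and `i` strictly less,
while `k - a` elements are served in total: this contradicts `∑ π j ≤ 1`.
-/

open Filter Finset Topology

open scoped Classical in
/-- The first time `k` with `m + 1 < π j * k`, i.e. when an index served `m` times would fall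
below `π j * k - 1`; `⊤` if there is none. -/
noncomputable def deadline (π : ℕ → ℝ) (m j : ℕ) : ℕ∞ :=
  if h : ∃ k : ℕ, (m : ℝ) + 1 < π j * k then (Nat.find h : ℕ∞) else ⊤

lemma deadline_le_iff {π : ℕ → ℝ} {j : ℕ} (hj : 0 ≤ π j) (m b : ℕ) :
    deadline π m j ≤ b ↔ (m : ℝ) + 1 < π j * b := by
  classical
  unfold deadline
  split_ifs with h
  · refine ⟨fun hle => (Nat.find_spec h).trans_le ?_, fun hb => mod_cast Nat.find_min' h hb⟩
    exact mul_le_mul_of_nonneg_left (mod_cast hle) hj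
  · simpa using fun hb => h ⟨b, hb⟩

section Count

variable {σ : ℕ → ℕ}

def count (σ : ℕ → ℕ) (k i : ℕ) : ℕ := #{n ∈ Icc 1 k | σ n = i}

@[simp]
lemma count_zero (i : ℕ) : count σ 0 i = 0 := rfl

lemma count_succ (k i : ℕ) :
    count σ (k + 1) i = count σ k i + if σ (k + 1) = i then 1 else 0 := by
  rw [count, ← insert_Icc_right_eq_Icc_add_one (by omega : 1 ≤ k + 1), filter_insert]
  split_ifs with h
  · rw [card_insert_of_notMem (by simp), count]
  · rfl

lemma count_mono (i : ℕ) : Monotone (count σ · i) :=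
  monotone_nat_of_le_succ fun k => by rw [count_succ]; omega

lemma sum_count {k : ℕ} {T : Finset ℕ} (hT : (Icc 1 k).image σ ⊆ T) :
    ∑ j ∈ T, count σ k j = k := by
  simp only [count]
  rw [← card_eq_sum_card_fiberwise fun n hn => hT (mem_image_of_mem σ hn), Nat.card_Icc,
    Nat.add_sub_cancel]

lemma exists_count_eq_zero (k : ℕ) : ∃ i, count σ k i = 0 := by
  obtain ⟨i, hi⟩ := Infinite.exists_notMem_finset ((Icc 1 k).image σ)
  refine ⟨i, card_eq_zero.mpr (filter_eq_empty_iff.mpr fun n hn hσn => hi ?_)⟩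
  exact mem_image.mpr ⟨n, hn, hσn⟩

lemma ncard_preimage_inter_Icc (i k : ℕ) :
    ((σ ⁻¹' {i} ∩ Set.Ici 1) ∩ Set.Icc 1 k).ncard = count σ k i := by
  rw [count, ← Set.ncard_coe_finset]
  congr 1
  ext n
  simp only [Set.mem_inter_iff, Set.mem_preimage, Set.mem_singleton_iff, Set.mem_Ici,
    Set.mem_Icc, coe_filter, mem_Icc, Set.mem_ofPred_eq]
  tauto

end Count

lemma exists_longest_final_run_not (P : ℕ → Prop) (b : ℕ) :
    ∃ a ≤ b, (∀ m, a ≤ m → m < b → ¬ P m) ∧ ∀ m, a = m + 1 → P m := by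
  induction b with
  | zero => exact ⟨0, le_rfl, fun m _ hm => absurd hm m.not_lt_zero, fun m h => absurd h (by omega)⟩
  | succ b ih =>
    by_cases hb : P b
    · exact ⟨b + 1, le_rfl, fun m h1 h2 => by omega, fun m h => by rwa [Nat.succ_injective h] at hb⟩
    · obtain ⟨a, hab, hrun, hstart⟩ := ih
      refine ⟨a, by omega, fun m ham hmb => ?_, hstart⟩
      rcases Nat.lt_succ_iff_lt_or_eq.mp hmb with hm | rfl
      exacts [hrun m ham hm, hb]

section EDF

variable {π : ℕ → ℝ} {σ : ℕ → ℕ}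

def underQuota (π : ℕ → ℝ) (c : ℕ → ℕ) (n : ℕ) : Set ℕ := {j | (c j : ℝ) ≤ π j * n}

structure IsEDFSchedule (π : ℕ → ℝ) (σ : ℕ → ℕ) : Prop where
  mem_underQuota (n : ℕ) : σ (n + 1) ∈ underQuota π (count σ n) (n + 1)
  deadline_le (n : ℕ) {j : ℕ} (hj : j ∈ underQuota π (count σ n) (n + 1)) :
    deadline π (count σ n (σ (n + 1))) (σ (n + 1)) ≤ deadline π (count σ n j) j

lemma IsEDFSchedule.count_le (hσ : IsEDFSchedule π σ) (hπ : ∀ i, 0 ≤ π i) (k i : ℕ) :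
    (count σ k i : ℝ) ≤ π i * k + 1 := by
  induction k with
  | zero => simp
  | succ k ih =>
    rw [count_succ]
    split_ifs with h
    · have := hσ.mem_underQuota k
      rw [h] at this
      simp only [underQuota, Set.mem_ofPred_eq] at this
      push_cast at this ⊢
      linarith
    · push_cast
      nlinarith [hπ i]

lemma count_eq_or_lt_of_deadline_le (hπ : ∀ i, 0 ≤ π i) {a b : ℕ} (hab : a ≤ b)
    (hrun : ∀ m, a ≤ m → m < b → deadline π (count σ m (σ (m + 1))) (σ (m + 1)) ≤ b) (j : ℕ) :
    count σ b j = count σ a j ∨ (count σ b j : ℝ) < π j * b := by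
  suffices ∀ n, a ≤ n → n ≤ b → count σ n j = count σ a j ∨ (count σ n j : ℝ) < π j * b from
    this b hab le_rfl
  intro n han
  induction n, han using Nat.le_induction with
  | base => exact fun _ => Or.inl rfl
  | succ n han ih =>
    intro hnb
    rw [count_succ]
    split_ifs with h
    · have hdl := hrun n han hnb
      rw [h, deadline_le_iff (hπ j)] at hdl
      right
      push_cast
      linarith
    · simpa using ih (by omega)

lemma IsEDFSchedule.quota_le_count_or (hσ : IsEDFSchedule π σ) (hπ : ∀ i, 0 ≤ π i) {a b : ℕ}
    (hstart : ∀ m, a = m + 1 → (b : ℕ∞) < deadline π (count σ m (σ (m + 1))) (σ (m + 1)))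
    (j : ℕ) : π j * b ≤ count σ a j + 1 ∨ π j * a ≤ count σ a j := by
  obtain _ | m := a
  · simp
  by_contra! h
  have hmono : (count σ m j : ℝ) ≤ count σ (m + 1) j := mod_cast count_mono j m.le_succ
  have hj : j ∈ underQuota π (count σ m) (m + 1) := by
    simp only [underQuota, Set.mem_ofPred_eq]
    linarith [h.2]
  have hdl : deadline π (count σ m j) j ≤ b := (deadline_le_iff (hπ j) _ _).mpr (by linarith [h.1])
  exact (hstart m rfl).not_ge ((hσ.deadline_le m hj).trans hdl)

theorem IsEDFSchedule.quota_sub_one_le_count (hσ : IsEDFSchedule π σ) (hπ : ∀ i, 0 ≤ π i)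
    (hπ1 : ∀ T : Finset ℕ, ∑ j ∈ T, π j ≤ 1) (k i : ℕ) : π i * k - 1 ≤ count σ k i := by
  by_contra! hlow
  obtain ⟨a, hak, hrun, hstart⟩ := exists_longest_final_run_not
    (fun m => (k : ℕ∞) < deadline π (count σ m (σ (m + 1))) (σ (m + 1))) k
  simp only [not_lt] at hrun
  have hquota := hσ.quota_le_count_or hπ hstart
  have hmono (j : ℕ) : (count σ a j : ℝ) ≤ count σ k j := mod_cast count_mono j hak
  have hak' : (a : ℝ) ≤ k := mod_cast hak
  have hle (j : ℕ) : (count σ k j : ℝ) - count σ a j ≤ π j * (k - a) := by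
    by_cases heq : count σ k j = count σ a j
    · rw [heq, sub_self]
      exact mul_nonneg (hπ j) (sub_nonneg.mpr hak')
    have hlt := (count_eq_or_lt_of_deadline_le hπ hak hrun j).resolve_left heq
    have hstep : (count σ a j : ℝ) + 1 ≤ count σ k j :=
      mod_cast (count_mono j hak).lt_of_ne (Ne.symm heq)
    rcases hquota j with h | h <;> linarith
  have hlt : (count σ k i : ℝ) - count σ a i < π i * (k - a) := by
    rcases hquota i with h | h <;> linarith [hmono i]
  set T := insert i ((Icc 1 k).image σ)
  have hsum : ∑ j ∈ T, ((count σ k j : ℝ) - count σ a j) = k - a := by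
    have hTa : (Icc 1 a).image σ ⊆ T :=
      (image_subset_image (Icc_subset_Icc_right hak)).trans (subset_insert _ _)
    rw [sum_sub_distrib, ← Nat.cast_sum, ← Nat.cast_sum, sum_count (subset_insert _ _),
      sum_count hTa]
  have hπT : ∑ j ∈ T, π j * (k - a) ≤ k - a := by
    rw [← sum_mul]
    exact mul_le_of_le_one_left (sub_nonneg.mpr hak') (hπ1 T)
  linarith [sum_lt_sum (s := T) (fun j _ => hle j) ⟨i, mem_insert_self i _, hlt⟩]

end EDF

section Construction

open scoped Classical in
noncomputable def edfChoice (π : ℕ → ℝ) (c : ℕ → ℕ) (n : ℕ) : ℕ :=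
  if h : (underQuota π c n).Nonempty then Function.argminOn (fun j => deadline π (c j) j) _ h
  else 0

noncomputable def edfCounts (π : ℕ → ℝ) : ℕ → ℕ → ℕ
  | 0 => fun _ => 0
  | k + 1 => fun i => edfCounts π k i + if edfChoice π (edfCounts π k) (k + 1) = i then 1 else 0

noncomputable def edfSchedule (π : ℕ → ℝ) : ℕ → ℕ
  | 0 => 0
  | k + 1 => edfChoice π (edfCounts π k) (k + 1)

lemma count_edfSchedule (π : ℕ → ℝ) (k : ℕ) : count (edfSchedule π) k = edfCounts π k := by
  induction k with
  | zero => rfl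
  | succ k ih =>
    funext i
    rw [count_succ, ih]
    rfl

lemma isEDFSchedule_edfSchedule {π : ℕ → ℝ} (hπ : ∀ i, 0 ≤ π i) :
    IsEDFSchedule π (edfSchedule π) := by
  have hne (n : ℕ) : (underQuota π (edfCounts π n) (n + 1)).Nonempty := by
    obtain ⟨i, hi⟩ := exists_count_eq_zero (σ := edfSchedule π) n
    rw [count_edfSchedule] at hi
    exact ⟨i, by simpa [underQuota, hi] using mul_nonneg (hπ i) n.cast_add_one_pos.le⟩
  have hσ (n : ℕ) : edfSchedule π (n + 1) =
      Function.argminOn (fun j => deadline π (edfCounts π n j) j) _ (hne n) :=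
    dif_pos (hne n)
  refine ⟨fun n => ?_, fun n j hj => ?_⟩
  · rw [hσ, count_edfSchedule]
    exact Function.argminOn_mem _ _ _
  · rw [count_edfSchedule] at hj ⊢
    rw [hσ]
    exact Function.argminOn_le (fun j => deadline π (edfCounts π n j) j) _ hj

end Construction

lemma tendsto_div_of_abs_sub_mul_le {f : ℕ → ℝ} {c C : ℝ} (h : ∀ k, |f k - c * k| ≤ C) :
    Tendsto (fun k => f k / k) atTop (𝓝 c) := by
  have herr : Tendsto (fun k : ℕ => (f k - c * k) / k) atTop (𝓝 0) := by
    refine squeeze_zero_norm' ?_ (tendsto_const_div_atTop_nhds_zero_nat C)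
    filter_upwards [eventually_gt_atTop 0] with k hk
    rw [norm_div, Real.norm_natCast, Real.norm_eq_abs]
    gcongr
    exact h k
  refine (by simpa using herr.const_add c : Tendsto _ _ _).congr' ?_
  filter_upwards [eventually_gt_atTop 0] with k hk
  field_simp
  ring

/-- For any nonnegative reals `π(1), π(2), …` summing to 1 (here `π i` is `π(i+1)`),
there is a partition of the positive integers into pairwise disjoint sets
`F₁, F₂, …` (here `F i` is `F_{i+1}`) such that for every `i` and every `k ≥ 1`,
`|F_i ∩ {1,…,k}| - π(i)·k ∈ [-1,1]`; consequently each `F_i` has natural density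
`π(i)`. -/
theorem stmt_9 (π : ℕ → ℝ) (hπ0 : ∀ i, 0 ≤ π i) (hπ1 : ∑' i, π i = 1) :
    ∃ F : ℕ → Set ℕ,
      (Pairwise fun i j => Disjoint (F i) (F j)) ∧
      (⋃ i, F i) = {n : ℕ | 1 ≤ n} ∧
      (∀ i, ∀ k : ℕ, 1 ≤ k →
        ((F i ∩ Set.Icc 1 k).ncard : ℝ) - π i * k ∈ Set.Icc (-1 : ℝ) 1) ∧
      (∀ i, Filter.Tendsto (fun k : ℕ => ((F i ∩ Set.Icc 1 k).ncard : ℝ) / k)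
        Filter.atTop (nhds (π i))) := by
  have hsum : Summable π := by
    by_contra h
    simp [tsum_eq_zero_of_not_summable h] at hπ1
  have hπT (T : Finset ℕ) : ∑ j ∈ T, π j ≤ 1 := hπ1 ▸ hsum.sum_le_tsum T fun i _ => hπ0 i
  have hσ := isEDFSchedule_edfSchedule hπ0
  have hdisc (i k : ℕ) : |(count (edfSchedule π) k i : ℝ) - π i * k| ≤ 1 :=
    abs_le.mpr ⟨by linarith [hσ.quota_sub_one_le_count hπ0 hπT k i],
      by linarith [hσ.count_le hπ0 k i]⟩
  refine ⟨fun i => edfSchedule π ⁻¹' {i} ∩ Set.Ici 1, fun i j hij => ?_, ?_,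
    fun i k _ => ?_, fun i => ?_⟩
  · exact ((Set.disjoint_singleton.mpr hij).preimage _).mono Set.inter_subset_left
      Set.inter_subset_left
  · ext n
    simp [Set.mem_Ici]
  · rw [ncard_preimage_inter_Icc]
    exact Set.mem_Icc.mpr (abs_le.mp (hdisc i k))
  · simp_rw [ncard_preimage_inter_Icc]
    exact tendsto_div_of_abs_sub_mul_le (hdisc i)
end

section
/- No online algorithm can achieve discrepancy strictly less than 11/10 in the setting of non-identical distributions: let S be a 5-element set and let π₁ = π₂ = π₃ be uniform on S. Then (i) for every choice of s₁, s₂, s₃ in S there exist two distinct elements i, j ∈ S with N₃(i) = N₃(j) = 0, so that N₃(i) − P₃(i) = N₃(j) − P₃(j) = −3/5; and (ii) if π₄ is taken to be uniform on {i, j} (i.e. π₄(i) = π₄(j) = 1/2 and π₄(s) = 0 otherwise), then for every choice of s₄ ∈ S there exists s ∈ S with N₄(s) − P₄(s) = −11/10. -/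
/-! After three steps at most three of the five points have been visited, so two points `i ≠ j`
are unvisited, each with deficit `0 - 3/5`. Putting `π₄` on `{i, j}` raises both expectations
by `1/2`, while `s₄` can visit only one of them; the other ends with deficit `-3/5 - 1/2`. -/

theorem List.exists_ne_notMem_of_length_add_two_le {S : Type*} [Fintype S] [DecidableEq S]
    (l : List S) (h : l.length + 2 ≤ Fintype.card S) : ∃ i j, i ≠ j ∧ i ∉ l ∧ j ∉ l := by
  have hcompl : 1 < l.toFinsetᶜ.card := by
    have := l.toFinset_card_le
    rw [Finset.card_compl]
    omega
  obtain ⟨i, hi, j, hj, hij⟩ := Finset.one_lt_card.mp hcompl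
  exact ⟨i, j, hij, by simpa using hi, by simpa using hj⟩

theorem List.exists_eq_or_eq_notMem_concat {S : Type*} {l : List S} {i j : S} (hij : i ≠ j)
    (hi : i ∉ l) (hj : j ∉ l) (a : S) : ∃ s, (s = i ∨ s = j) ∧ s ∉ l ++ [a] := by
  by_cases ha : a = i
  · exact ⟨j, Or.inr rfl, by simp [hj, ha, hij.symm]⟩
  · exact ⟨i, Or.inl rfl, by simp [hi, Ne.symm ha]⟩

/-- Online lower bound on a 5-element set `S` with `π₁ = π₂ = π₃` uniform (so
`P₃(s) = 3/5`): (i) for any `s₁, s₂, s₃` there are distinct `i ≠ j` unvisited, giving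
`N₃(i) - P₃(i) = N₃(j) - P₃(j) = -3/5`; (ii) if `π₄` is uniform on `{i, j}` (so
`P₄(s) = 3/5 + π₄(s)`), then for any choice of `s₄` some `s ∈ S` has
`N₄(s) - P₄(s) = -11/10`. -/
theorem stmt_11 {S : Type*} [Fintype S] [DecidableEq S] (hcard : Fintype.card S = 5) :
    (∀ s1 s2 s3 : S, ∃ i j : S, i ≠ j ∧
        [s1, s2, s3].count i = 0 ∧ [s1, s2, s3].count j = 0 ∧
        ([s1, s2, s3].count i : ℝ) - 3 / 5 = -(3 / 5) ∧
        ([s1, s2, s3].count j : ℝ) - 3 / 5 = -(3 / 5)) ∧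
    (∀ s1 s2 s3 i j : S, i ≠ j →
        [s1, s2, s3].count i = 0 → [s1, s2, s3].count j = 0 →
        ∀ s4 : S, ∃ s : S,
          ([s1, s2, s3, s4].count s : ℝ)
            - (3 / 5 + (if s = i ∨ s = j then (1 / 2 : ℝ) else 0)) = -(11 / 10)) := by
  constructor
  · intro s1 s2 s3
    obtain ⟨i, j, hij, hi, hj⟩ :=
      [s1, s2, s3].exists_ne_notMem_of_length_add_two_le (by simp [hcard])
    have hi₀ := List.count_eq_zero.mpr hi
    have hj₀ := List.count_eq_zero.mpr hj
    exact ⟨i, j, hij, hi₀, hj₀, by simp [hi₀], by simp [hj₀]⟩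
  · intro s1 s2 s3 i j hij hi hj s4
    obtain ⟨s, hs, hs_notMem : s ∉ [s1, s2, s3, s4]⟩ :=
      List.exists_eq_or_eq_notMem_concat hij (List.count_eq_zero.mp hi)
        (List.count_eq_zero.mp hj) s4
    refine ⟨s, ?_⟩
    rw [List.count_eq_zero.mpr hs_notMem, if_pos hs]
    norm_num
end
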